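/- arXiv:1508.06141 — 7 statements merged into one kernel-verified Lean document; each statement's English description precedes it below -/
import Mathlib

section
/- Let σ ∈ S_n and (a,b) with a < b, (a,b) ∉ Inv(σ), and d_σ(a,b) = 0 where d_σ(a,b) = |{a < k < b : σ⁻¹(a) < σ⁻¹(k) < σ⁻¹(b)}|. If a and b are not adjacent in σ (i.e., σ⁻¹(b) ≠ σ⁻¹(a)+1), then there exists a pair (c,d) with c < d, (c,d) ∉ Inv(σ), d_σ(c,d) = 0, and either (c,d) = (d',b) with d' < a, or (c,d) = (a,p) with p > b. -/
/-- The inversion set of a permutation `σ ∈ S_n`: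
pairs `(a,b)` with `a < b` and `σ⁻¹ a > σ⁻¹ b`. -/
def InvSet {n : ℕ} (σ : Equiv.Perm (Fin n)) : Finset (Fin n × Fin n) :=
  Finset.univ.filter fun p => p.1 < p.2 ∧ σ⁻¹ p.2 < σ⁻¹ p.1

/-- Coxeter length of a permutation, i.e. its number of inversions. -/
def permLen {n : ℕ} (σ : Equiv.Perm (Fin n)) : ℕ := (InvSet σ).card

/-- `s` is a simple transposition `s_i = (i, i+1)`. -/
def IsSimpleT {n : ℕ} (s : Equiv.Perm (Fin n)) : Prop :=
  ∃ i j : Fin n, (j : ℕ) = (i : ℕ) + 1 ∧ s = Equiv.swap i j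

/-- The right weak order on `S_n`: `σ ≤_R τ` iff `τ = σ s_{i_1} ⋯ s_{i_k}`
with `ℓ(τ) = ℓ(σ) + k`. -/
def WeakLE {n : ℕ} (σ τ : Equiv.Perm (Fin n)) : Prop :=
  ∃ l : List (Equiv.Perm (Fin n)), (∀ s ∈ l, IsSimpleT s) ∧ τ = σ * l.prod ∧
    permLen τ = permLen σ + l.length

/-- The statistic `d_σ(a,b)` for `(a,b) ∉ Inv(σ)`. -/
def dStat {n : ℕ} (σ : Equiv.Perm (Fin n)) (a b : Fin n) : ℕ :=
  (Finset.univ.filter fun k : Fin n =>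
    a < k ∧ k < b ∧ σ⁻¹ a < σ⁻¹ k ∧ σ⁻¹ k < σ⁻¹ b).card

/-
Proof idea: the values placed strictly between `a` and `b` in `σ` form a nonempty window (by
non-adjacency), and `d_σ(a,b) = 0` says none of them lies in the value interval `(a,b)`.
If some window value exceeds `b`, the least such `e` gives `(a,e)`; otherwise the greatest window
value `c < a` gives `(c,b)`. In either case a value counted by the new statistic would sit in the
old window strictly inside the value interval of the new pair, contradicting `d_σ(a,b) = 0` or
the extremal choice.
-/

namespace Equiv.Perm

variable {n : ℕ} (σ : Equiv.Perm (Fin n)) {a b c e : Fin n}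

theorem notMem_invSet_iff (h : c < e) : (c, e) ∉ InvSet σ ↔ σ⁻¹ c < σ⁻¹ e := by
  simp only [InvSet, Finset.mem_filter, Finset.mem_univ, true_and, h, not_lt]
  exact ⟨fun hle => hle.lt_of_ne (σ⁻¹.injective.ne h.ne), le_of_lt⟩

theorem dStat_eq_zero_iff :
    dStat σ a b = 0 ↔ ∀ k, a < k → k < b → σ⁻¹ a < σ⁻¹ k → ¬σ⁻¹ k < σ⁻¹ b := by
  simp [dStat, Finset.card_eq_zero, Finset.filter_eq_empty_iff]

theorem lt_or_gt_of_dStat_eq_zero (hd : dStat σ a b = 0) {k : Fin n}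
    (hak : σ⁻¹ a < σ⁻¹ k) (hkb : σ⁻¹ k < σ⁻¹ b) : k < a ∨ b < k := by
  have hka : k ≠ a := by rintro rfl; exact hak.false
  have hkb' : k ≠ b := by rintro rfl; exact hkb.false
  by_contra! h
  exact (σ.dStat_eq_zero_iff.1 hd) k (h.1.lt_of_ne' hka) (h.2.lt_of_ne hkb') hak hkb

theorem dStat_eq_zero_of_isLeast
    (hd : dStat σ a b = 0) (he : IsLeast {k | b < k ∧ σ⁻¹ a < σ⁻¹ k ∧ σ⁻¹ k < σ⁻¹ b} e) :
    dStat σ a e = 0 := by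
  refine σ.dStat_eq_zero_iff.2 fun k hak hke h1 h2 => ?_
  have hkb : σ⁻¹ k < σ⁻¹ b := h2.trans he.1.2.2
  rcases σ.lt_or_gt_of_dStat_eq_zero hd h1 hkb with hka | hbk
  · exact hak.not_gt hka
  · exact hke.not_ge (he.2 ⟨hbk, h1, hkb⟩)

theorem dStat_eq_zero_of_isGreatest
    (hd : dStat σ a b = 0) (hc : IsGreatest {k | k < a ∧ σ⁻¹ a < σ⁻¹ k ∧ σ⁻¹ k < σ⁻¹ b} c) :
    dStat σ c b = 0 := by
  refine σ.dStat_eq_zero_iff.2 fun k hck hkb h1 h2 => ?_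
  have hak : σ⁻¹ a < σ⁻¹ k := hc.1.2.1.trans h1
  rcases σ.lt_or_gt_of_dStat_eq_zero hd hak h2 with hka | hbk
  · exact hck.not_ge (hc.2 ⟨hka, hak, h2⟩)
  · exact hkb.not_gt hbk

end Equiv.Perm

/-- if `a < b`, `(a,b) ∉ Inv(σ)`, `d_σ(a,b) = 0` and `a, b` are not
adjacent in `σ`, then there is a pair `(c,e)` with `c < e`, `(c,e) ∉ Inv(σ)`,
`d_σ(c,e) = 0`, and either `e = b` with `c < a`, or `c = a` with `e > b`. -/
theorem blocking_hook_pair {n : ℕ} (σ : Equiv.Perm (Fin n)) (a b : Fin n)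
    (hab : a < b) (hinv : (a, b) ∉ InvSet σ) (hd : dStat σ a b = 0)
    (hadj : ((σ⁻¹ b : Fin n) : ℕ) ≠ ((σ⁻¹ a : Fin n) : ℕ) + 1) :
    ∃ c e : Fin n, c < e ∧ (c, e) ∉ InvSet σ ∧ dStat σ c e = 0 ∧
      ((e = b ∧ c < a) ∨ (c = a ∧ b < e)) := by
  have hpos : σ⁻¹ a < σ⁻¹ b := (σ.notMem_invSet_iff hab).1 hinv
  have hncov : ¬σ⁻¹ a ⋖ σ⁻¹ b := fun h =>
    hadj (Nat.covBy_iff_add_one_eq.1 (Fin.covBy_iff.1 h)).symm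
  obtain ⟨m, ham, hmb⟩ := exists_lt_lt_of_not_covBy hpos hncov
  obtain ⟨k, hak, hkb⟩ : ∃ k, σ⁻¹ a < σ⁻¹ k ∧ σ⁻¹ k < σ⁻¹ b :=
    ⟨σ m, by simpa using ham, by simpa using hmb⟩
  have : Nonempty (Fin n) := ⟨a⟩
  by_cases hup : ∃ k, b < k ∧ σ⁻¹ a < σ⁻¹ k ∧ σ⁻¹ k < σ⁻¹ b
  · obtain ⟨e, he⟩ := (Set.toFinite _).bddBelow.exists_isLeast_of_nonempty hup
    exact ⟨a, e, hab.trans he.1.1, (σ.notMem_invSet_iff (hab.trans he.1.1)).2 he.1.2.1,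
      σ.dStat_eq_zero_of_isLeast hd he, Or.inr ⟨rfl, he.1.1⟩⟩
  · have hka : k < a := (σ.lt_or_gt_of_dStat_eq_zero hd hak hkb).resolve_right
      fun hbk => hup ⟨k, hbk, hak, hkb⟩
    have hdown : {k | k < a ∧ σ⁻¹ a < σ⁻¹ k ∧ σ⁻¹ k < σ⁻¹ b}.Nonempty := ⟨k, hka, hak, hkb⟩
    obtain ⟨c, hc⟩ := (Set.toFinite _).bddAbove.exists_isGreatest_of_nonempty hdown
    exact ⟨c, b, hc.1.1.trans hab, (σ.notMem_invSet_iff (hc.1.1.trans hab)).2 hc.1.2.2,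
      σ.dStat_eq_zero_of_isGreatest hd hc, Or.inl ⟨rfl, hc.1.1⟩⟩
end

section
/- Let G = (V,E) be a simple acyclic digraph with a valuation θ: V → ℕ satisfying 0 ≤ θ(x) ≤ outdegree(x) for all x. A finite subset A ⊆ V is an initial section of some peeling sequence of (G,θ) if and only if: (1) for all x ∈ A, θ(x) ≤ |{y ∈ A : (x,y) ∈ E}|, and (2) for all x ∈ V∖A, θ(x) ≥ |{y ∈ A : (x,y) ∈ E}|. -/
open scoped Classical

variable {V : Type*}

/-- A digraph is acyclic when its transitive closure is irreflexive. -/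
def Acyclic (E : V → V → Prop) : Prop := ∀ x, ¬ Relation.TransGen E x x

/-- `θ` is an out-degree compatible valuation: `θ x ≤ d⁺(x)` for every vertex. -/
def IsOCV (E : V → V → Prop) (θ : V → ℕ) : Prop :=
  ∀ x, ∃ s : Finset V, (∀ y ∈ s, E x y) ∧ θ x ≤ s.card

/-- The current valuation after the vertices of `R` have been peeled. -/
noncomputable def curVal (E : V → V → Prop) (θ : V → ℕ) (R : Finset V) (x : V) : ℕ :=
  θ x - (R.filter fun y => E x y).card

/-- `x` is erasable in the valued digraph obtained after peeling the vertices of `R`. -/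
def ErasableAt (E : V → V → Prop) (θ : V → ℕ) (R : Finset V) (x : V) : Prop :=
  x ∉ R ∧ curVal E θ R x = 0 ∧ ∀ z, z ∉ R → E z x → curVal E θ R z ≠ 0

/-- `PeelFrom E θ R L`: starting from the state where `R` has been peeled, the
list `L` is a valid sequence of successive peelings. -/
def PeelFrom (E : V → V → Prop) (θ : V → ℕ) : Finset V → List V → Prop
  | _, [] => True
  | R, x :: L => ErasableAt E θ R x ∧ PeelFrom E θ (insert x R) L

/-- `A` is an initial section of some peeling sequence of the valued digraph `(G, θ)`. -/
def IsInitialSection (E : V → V → Prop) (θ : V → ℕ) (A : Finset V) : Prop :=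
  ∃ L : List V, PeelFrom E θ ∅ L ∧ L.toFinset = A

/-!
Peeling `x` at state `R` raises `#{y ∈ R | E z y}` by one exactly for the in-neighbours `z`
of `x`, all of which still have positive current value; so "every vertex outside the peeled
set keeps `#{y ∈ R | E z y} ≤ θ z`" is invariant, and a peeled vertex `x` had
`θ x ≤ #{y ∈ R | E x y}` when it was removed. Conversely, given the bounds for `B ⊇ R`, a sink
of `B \ R` has current value `0`, and by acyclicity some vertex of current value `0` in `B \ R`
has no in-neighbour of current value `0` in `B \ R`; the bound outside `B` shows that it is
erasable, and peeling it brings us closer to `B`.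
-/

open Finset

def PeelingBounds (E : V → V → Prop) (θ : V → ℕ) (A : Finset V) : Prop :=
  (∀ x ∈ A, θ x ≤ #{y ∈ A | E x y}) ∧ ∀ x ∉ A, #{y ∈ A | E x y} ≤ θ x

namespace Acyclic

variable {E : V → V → Prop}

theorem swap (hac : Acyclic E) : Acyclic (Function.swap E) :=
  fun x hx => hac x hx.swap

theorem exists_source (hac : Acyclic E) (S : Finset V) (hS : S.Nonempty) :
    ∃ x ∈ S, ∀ z ∈ S, ¬ E z x := by
  induction S using Finset.strongInduction with
  | _ S ih =>
    obtain ⟨a, ha⟩ := hS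
    by_cases h : ∀ z ∈ S, ¬ E z a
    · exact ⟨a, ha, h⟩
    push Not at h
    obtain ⟨b, hb, hba⟩ := h
    -- Recurse on the ancestors of `a` in `S`, which exclude `a` itself.
    set T := {z ∈ S | Relation.TransGen E z a}
    have hTS : T ⊂ S := filter_ssubset.mpr ⟨a, ha, hac a⟩
    obtain ⟨x, hxT, hx⟩ := ih T hTS ⟨b, mem_filter.mpr ⟨hb, .single hba⟩⟩
    obtain ⟨hxS, hxa⟩ := mem_filter.mp hxT
    exact ⟨x, hxS, fun z hz hzx => hx z (mem_filter.mpr ⟨hz, .head hzx hxa⟩) hzx⟩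

theorem exists_sink (hac : Acyclic E) (S : Finset V) (hS : S.Nonempty) :
    ∃ x ∈ S, ∀ z ∈ S, ¬ E x z :=
  hac.swap.exists_source S hS

end Acyclic

section Peeling

variable {E : V → V → Prop} {θ : V → ℕ}

theorem curVal_eq_zero_iff {R : Finset V} {x : V} :
    curVal E θ R x = 0 ↔ θ x ≤ #{y ∈ R | E x y} :=
  Nat.sub_eq_zero_iff_le

theorem curVal_ne_zero_iff {R : Finset V} {x : V} :
    curVal E θ R x ≠ 0 ↔ #{y ∈ R | E x y} < θ x := by
  rw [Ne, curVal_eq_zero_iff, not_le]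

theorem peelingBounds_empty : PeelingBounds E θ ∅ := by
  simp [PeelingBounds]

theorem PeelingBounds.insert_of_erasableAt {R : Finset V} {x : V}
    (hR : PeelingBounds E θ R) (hx : ErasableAt E θ R x) :
    PeelingBounds E θ (insert x R) := by
  obtain ⟨hxR, hx0, hin⟩ := hx
  have hmono : ∀ z, #{y ∈ R | E z y} ≤ #{y ∈ insert x R | E z y} := fun z =>
    card_le_card (filter_subset_filter _ (subset_insert x R))
  constructor
  · intro z hz
    rcases mem_insert.mp hz with rfl | hzR
    · exact (curVal_eq_zero_iff.mp hx0).trans (hmono z)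
    · exact (hR.1 z hzR).trans (hmono z)
  · intro z hz
    have hzR : z ∉ R := fun h => hz (mem_insert_of_mem h)
    rw [filter_insert]
    split_ifs with hzx
    · rw [card_insert_of_notMem fun h => hxR (mem_filter.mp h).1]
      exact curVal_ne_zero_iff.mp (hin z hzR hzx)
    · exact hR.2 z hzR

theorem PeelFrom.peelingBounds_union {R : Finset V} {L : List V}
    (hL : PeelFrom E θ R L) (hR : PeelingBounds E θ R) :
    PeelingBounds E θ (R ∪ L.toFinset) := by
  induction L generalizing R with
  | nil => simpa using hR
  | cons x L ih =>
    have h := ih hL.2 (hR.insert_of_erasableAt hL.1)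
    rwa [insert_union, ← union_insert, ← List.toFinset_cons] at h

theorem PeelingBounds.exists_erasableAt (hac : Acyclic E) {R B : Finset V}
    (hB : PeelingBounds E θ B) (hRB : R ⊂ B) : ∃ x ∈ B \ R, ErasableAt E θ R x := by
  obtain ⟨m, hm, hm_sink⟩ :=
    hac.exists_sink (B \ R) (sdiff_nonempty.mpr (not_subset_of_ssubset hRB))
  have hm0 : curVal E θ R m = 0 := by
    have hsucc : {y ∈ B | E m y} ⊆ {y ∈ R | E m y} := fun y hy => by
      obtain ⟨hyB, hmy⟩ := mem_filter.mp hy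
      refine mem_filter.mpr ⟨?_, hmy⟩
      by_contra hyR
      exact hm_sink y (mem_sdiff.mpr ⟨hyB, hyR⟩) hmy
    exact curVal_eq_zero_iff.mpr ((hB.1 m (mem_sdiff.mp hm).1).trans (card_le_card hsucc))
  obtain ⟨x, hxS, hx_src⟩ := hac.exists_source {x ∈ B \ R | curVal E θ R x = 0}
    ⟨m, mem_filter.mpr ⟨hm, hm0⟩⟩
  obtain ⟨hx, hx0⟩ := mem_filter.mp hxS
  obtain ⟨hxB, hxR⟩ := mem_sdiff.mp hx
  refine ⟨x, hx, hxR, hx0, fun z hzR hzx hz0 => ?_⟩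
  by_cases hzB : z ∈ B
  · exact hx_src z (mem_filter.mpr ⟨mem_sdiff.mpr ⟨hzB, hzR⟩, hz0⟩) hzx
  · -- `x` is an out-neighbour of `z` in `B` but not in `R`.
    have hlt : #{y ∈ R | E z y} < #{y ∈ B | E z y} := by
      refine card_lt_card ⟨filter_subset_filter _ hRB.subset, fun h => hxR ?_⟩
      exact (mem_filter.mp (h (mem_filter.mpr ⟨hxB, hzx⟩))).1
    exact curVal_ne_zero_iff.mpr (hlt.trans_le (hB.2 z hzB)) hz0

theorem PeelingBounds.exists_peelFrom (hac : Acyclic E) {R B : Finset V}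
    (hB : PeelingBounds E θ B) (hRB : R ⊆ B) :
    ∃ L : List V, PeelFrom E θ R L ∧ L.toFinset = B \ R := by
  induction h : #(B \ R) generalizing R with
  | zero => exact ⟨[], trivial, (card_eq_zero.mp h).symm⟩
  | succ n ih =>
    have hRB' : R ⊂ B := hRB.ssubset_of_ne (by rintro rfl; simp at h)
    obtain ⟨x, hx, hxe⟩ := hB.exists_erasableAt hac hRB'
    obtain ⟨hxB, hxR⟩ := mem_sdiff.mp hx
    have hsdiff : B \ insert x R = (B \ R).erase x := sdiff_insert B R x
    obtain ⟨L, hL, hLB⟩ := ih (insert_subset hxB hRB)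
      (by rw [hsdiff, card_erase_of_mem hx, h]; rfl)
    refine ⟨x :: L, ⟨hxe, hL⟩, ?_⟩
    rw [List.toFinset_cons, hLB, hsdiff, insert_erase hx]

end Peeling

theorem isInitialSection_iff_general (E : V → V → Prop) (θ : V → ℕ)
    (hac : Acyclic E) (A : Finset V) :
    IsInitialSection E θ A ↔
      ((∀ x ∈ A, θ x ≤ (A.filter fun y => E x y).card) ∧
        ∀ x ∉ A, (A.filter fun y => E x y).card ≤ θ x) := by
  change IsInitialSection E θ A ↔ PeelingBounds E θ A
  constructor
  · rintro ⟨L, hL, rfl⟩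
    simpa using hL.peelingBounds_union peelingBounds_empty
  · intro hA
    obtain ⟨L, hL, hLA⟩ := hA.exists_peelFrom hac (empty_subset A)
    exact ⟨L, hL, by rw [hLA, sdiff_empty]⟩

/-- a finite set `A` is an initial section of a peeling sequence of a
valued digraph `(G,θ)` iff (1) `θ x ≤ #{y ∈ A : x → y}` for `x ∈ A` and
(2) `θ x ≥ #{y ∈ A : x → y}` for `x ∉ A`. -/
theorem isInitialSection_iff (E : V → V → Prop) (θ : V → ℕ)
    (hac : Acyclic E) (hocv : IsOCV E θ) (A : Finset V) :
    IsInitialSection E θ A ↔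
      ((∀ x ∈ A, θ x ≤ (A.filter fun y => E x y).card) ∧
        ∀ x ∉ A, (A.filter fun y => E x y).card ≤ θ x) :=
  isInitialSection_iff_general E θ hac A
end

section
/- Let (G,θ) be a valued digraph and let S be a nonempty collection of initial sections with X = ⋂_{A∈S} A. If there exists x ∈ X with θ(x) = 0, then there exists z ∈ X which is erasable in (G,θ), i.e., θ(z) = 0 and every in-neighbor y of z has θ(y) ≠ 0. -/
open scoped Classical

variable {V : Type*}

/-! When a vertex is peeled, each of its zero-valued in-neighbours must already have been
peeled, since its current value is still 0. Hence every initial section is closed under zero-valued in-neighbours, and hence so is `X`. The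
zero-valued vertices of `X` form a finite set (they lie in any member of `S`), so acyclicity
gives one with no in-neighbour in that set; by the closure property it has no zero-valued
in-neighbour at all. -/

lemma Acyclic.exists_minimal {E : V → V → Prop} (hE : Acyclic E) {s : Set V}
    (hs : s.Finite) (hne : s.Nonempty) : ∃ z ∈ s, ∀ y ∈ s, ¬ E y z := by
  have : IsStrictOrder V (Relation.TransGen E) :=
    { irrefl := hE, trans := fun _ _ _ => Relation.TransGen.trans }
  obtain ⟨x, hx⟩ := hne
  obtain ⟨⟨z, hz⟩, -, hmin⟩ :=
    (hs.wellFoundedOn (r := Relation.TransGen E)).has_min Set.univ ⟨⟨x, hx⟩, trivial⟩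
  exact ⟨z, hz, fun y hy hyz => hmin ⟨y, hy⟩ trivial (.single hyz)⟩

section Peeling

variable {E : V → V → Prop} {θ : V → ℕ}

lemma curVal_eq_zero_of_eq_zero (R : Finset V) {y : V} (hy : θ y = 0) :
    curVal E θ R y = 0 := by
  simp [curVal, hy]

lemma PeelFrom.mem_of_adj {R : Finset V} {L : List V} (hL : PeelFrom E θ R L) {y z : V}
    (hz : z ∈ L) (hyz : E y z) (hy : θ y = 0) : y ∈ R ∨ y ∈ L := by
  induction L generalizing R with
  | nil => simp at hz
  | cons a L ih =>
    obtain ⟨ha, hL⟩ := hL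
    by_cases hyR : y ∈ R
    · exact Or.inl hyR
    rcases List.mem_cons.1 hz with rfl | hz
    · exact absurd (curVal_eq_zero_of_eq_zero R hy) (ha.2.2 y hyR hyz)
    · simpa [hyR] using ih hL hz

lemma IsInitialSection.mem_of_adj {A : Finset V} (hA : IsInitialSection E θ A) {y z : V}
    (hz : z ∈ A) (hyz : E y z) (hy : θ y = 0) : y ∈ A := by
  obtain ⟨L, hL, rfl⟩ := hA
  simpa using hL.mem_of_adj (List.mem_toFinset.1 hz) hyz hy

end Peeling

theorem exists_erasable_in_intersection_general (E : V → V → Prop) (θ : V → ℕ)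
    (hac : Acyclic E) (S : Set (Finset V)) (hSne : S.Nonempty)
    (hS : ∀ A ∈ S, IsInitialSection E θ A)
    (x : V) (hx : ∀ A ∈ S, x ∈ A) (hθx : θ x = 0) :
    ∃ z : V, (∀ A ∈ S, z ∈ A) ∧ θ z = 0 ∧ ∀ y, E y z → θ y ≠ 0 := by
  obtain ⟨A₀, hA₀⟩ := hSne
  let Z : Set V := {z | (∀ A ∈ S, z ∈ A) ∧ θ z = 0}
  have hZ : Z.Finite := A₀.finite_toSet.subset fun z hz => hz.1 A₀ hA₀
  obtain ⟨z, ⟨hzX, hz0⟩, hmin⟩ := hac.exists_minimal hZ ⟨x, hx, hθx⟩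
  refine ⟨z, hzX, hz0, fun y hyz hy => hmin y ⟨fun A hA => ?_, hy⟩ hyz⟩
  exact (hS A hA).mem_of_adj (hzX A hA) hyz hy

/-- if `S` is a nonempty collection of initial sections whose
intersection `X` contains a vertex of valuation `0`, then `X` contains a vertex
which is erasable in `(G,θ)`. -/
theorem exists_erasable_in_intersection (E : V → V → Prop) (θ : V → ℕ)
    (hac : Acyclic E) (hocv : IsOCV E θ) (S : Set (Finset V)) (hSne : S.Nonempty)
    (hS : ∀ A ∈ S, IsInitialSection E θ A)
    (x : V) (hx : ∀ A ∈ S, x ∈ A) (hθx : θ x = 0) :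
    ∃ z : V, (∀ A ∈ S, z ∈ A) ∧ θ z = 0 ∧ ∀ y, E y z → θ y ≠ 0 :=
  exists_erasable_in_intersection_general E θ hac S hSne hS x hx hθx
end

section
/- Define the valued digraph 𝒜 on the staircase set λ_n = {(a,b) ∈ [n]² : a < b}, with an arc from (a,b) to (c,d) iff (c,d) ≠ (a,b) and (c,d) = (a,k) or (k,b) for some a < k < b, and valuation θ(a,b) = b - a - 1. Then the initial sections of 𝒜 are exactly the inversion sets of permutations: IS(𝒜) = {Inv(σ) : σ ∈ S_n}. -/
open scoped Classical

variable {V : Type*}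

/-- The staircase diagram `λ_n = {(a,b) : a < b}`. -/
def Lam (n : ℕ) := {p : Fin n × Fin n // p.1 < p.2}

/-- Arcs of the staircase valued digraph `𝒜`: from `(a,b)` to the boxes
`(a,k)` and `(k,b)` of the hook based on `(a,b)`, for `a < k < b`. -/
def lamE {n : ℕ} (p q : Lam n) : Prop :=
  p ≠ q ∧ ((q.1.1 = p.1.1 ∧ q.1.2 < p.1.2) ∨ (q.1.2 = p.1.2 ∧ p.1.1 < q.1.1))

/-- Valuation of the staircase valued digraph: `θ(a,b) = b - a - 1`. -/
def lamTheta {n : ℕ} (p : Lam n) : ℕ := (p.1.2 : ℕ) - (p.1.1 : ℕ) - 1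

instance {n : ℕ} : Fintype (Lam n) := Subtype.fintype _

/-- The inversion set of `σ ∈ S_n`, as a set of boxes of the staircase diagram. -/
def invLam {n : ℕ} (σ : Equiv.Perm (Fin n)) : Finset (Lam n) :=
  Finset.univ.filter fun p => σ⁻¹ p.1.2 < σ⁻¹ p.1.1

/-!
Read `σ⁻¹ x` as the position of the value `x` in `σ`. For a box `(a,b) ∉ Inv σ`, the boxes
`(a,k)` and `(k,b)` of its hook that lie in `Inv σ` correspond exactly to the values
`a < k < b` placed outside the positions of `a` and `b`, so its current value after peeling
`Inv σ` counts the values of `(a,b)` placed strictly between `a` and `b`. It follows that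
`(a,b)` is erasable after `Inv σ` iff `a` and `b` occupy adjacent positions: adjacency kills
every middle value of `(a,b)` and supplies one (`b`, resp. `a`) for each box entering `(a,b)`;
conversely a value placed between `a` and `b` can be pushed, by well-founded descent through
the boxes entering `(a,b)`, into the interval `(a,b)`. Erasing at adjacent positions is
multiplication by the simple transposition of these positions, and adds exactly `(a,b)` to the
inversion set; so peeling from `∅` stays among inversion sets, and every inversion set is
reached by undoing a descent.
-/
section Peeling

variable {E : V → V → Prop} {θ : V → ℕ}

theorem peelFrom_append (L₁ L₂ : List V) (R : Finset V) :
    PeelFrom E θ R (L₁ ++ L₂) ↔ PeelFrom E θ R L₁ ∧ PeelFrom E θ (R ∪ L₁.toFinset) L₂ := by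
  induction L₁ generalizing R with
  | nil => simp [PeelFrom]
  | cons x L₁ ih =>
    simp only [List.cons_append, PeelFrom, ih, List.toFinset_cons, Finset.union_insert,
      Finset.insert_union, and_assoc]

theorem isInitialSection_empty : IsInitialSection E θ ∅ :=
  ⟨[], trivial, rfl⟩

theorem IsInitialSection.insert {A : Finset V} {x : V} (hA : IsInitialSection E θ A)
    (hx : ErasableAt E θ A x) : IsInitialSection E θ (insert x A) := by
  obtain ⟨L, hL, rfl⟩ := hA
  refine ⟨L ++ [x], (peelFrom_append L [x] ∅).2 ⟨hL, ?_⟩, ?_⟩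
  · simpa [PeelFrom] using hx
  · ext; simp

theorem isInitialSection_induction {P : Finset V → Prop} (empty : P ∅)
    (step : ∀ A x, P A → ErasableAt E θ A x → P (insert x A)) {A : Finset V}
    (hA : IsInitialSection E θ A) : P A := by
  obtain ⟨L, hL, rfl⟩ := hA
  suffices ∀ R, P R → PeelFrom E θ R L → P (R ∪ L.toFinset) by simpa using this ∅ empty hL
  clear hL
  induction L with
  | nil => simpa using fun R hR _ => hR
  | cons x L ih =>
    rintro R hR ⟨hx, hL⟩
    simpa [Finset.insert_union] using ih _ (step R x hR hx) hL

end Peeling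

section Between

variable {α β : Type*} [LinearOrder α] [Preorder β] {π : α → β} {a b : α}

theorem not_between_of_gt [WellFoundedLT α]
    (hmid : ∀ k, a < k → k < b → ¬(π a < π k ∧ π k < π b))
    (hright : ∀ d, b < d → π a < π d → ∃ k, a < k ∧ k < d ∧ π a < π k ∧ π k < π d)
    {x : α} (hbx : b < x) : ¬(π a < π x ∧ π x < π b) := by
  induction x using WellFoundedLT.induction with
  | _ x ih =>
    rintro ⟨hax, hxb⟩
    obtain ⟨k, hak, hkx, h₁, h₂⟩ := hright x hbx hax
    rcases lt_trichotomy k b with hkb | rfl | hbk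
    · exact hmid k hak hkb ⟨h₁, h₂.trans hxb⟩
    · exact lt_irrefl _ (h₂.trans hxb)
    · exact ih k hkx hbk ⟨h₁, h₂.trans hxb⟩

theorem not_between_of_lt [WellFoundedGT α]
    (hmid : ∀ k, a < k → k < b → ¬(π a < π k ∧ π k < π b))
    (hleft : ∀ c, c < a → π c < π b → ∃ k, c < k ∧ k < b ∧ π c < π k ∧ π k < π b)
    {x : α} (hxa : x < a) : ¬(π a < π x ∧ π x < π b) := by
  induction x using WellFoundedGT.induction with
  | _ x ih =>
    rintro ⟨hax, hxb⟩
    obtain ⟨k, hxk, hkb, h₁, h₂⟩ := hleft x hxa hxb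
    rcases lt_trichotomy k a with hka | rfl | hak
    · exact ih k hxk hka ⟨hax.trans h₁, h₂⟩
    · exact lt_irrefl _ (hax.trans h₁)
    · exact hmid k hak hkb ⟨hax.trans h₁, h₂⟩

theorem covBy_of_not_between [WellFoundedLT α] [WellFoundedGT α] (hπ : Function.Surjective π)
    (hab : π a < π b)
    (hmid : ∀ k, a < k → k < b → ¬(π a < π k ∧ π k < π b))
    (hright : ∀ d, b < d → π a < π d → ∃ k, a < k ∧ k < d ∧ π a < π k ∧ π k < π d)
    (hleft : ∀ c, c < a → π c < π b → ∃ k, c < k ∧ k < b ∧ π c < π k ∧ π k < π b) :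
    π a ⋖ π b := by
  refine ⟨hab, fun y hay hyb => ?_⟩
  obtain ⟨x, rfl⟩ := hπ y
  rcases lt_trichotomy x a with hxa | rfl | hax
  · exact not_between_of_lt hmid hleft hxa ⟨hay, hyb⟩
  · exact lt_irrefl _ hay
  rcases lt_trichotomy x b with hxb | rfl | hbx
  · exact hmid x hax hxb ⟨hay, hyb⟩
  · exact lt_irrefl _ hyb
  · exact not_between_of_gt hmid hright hbx ⟨hay, hyb⟩

end Between

section Staircase

variable {n : ℕ} {σ : Equiv.Perm (Fin n)} {p q : Lam n}

theorem Lam.ext (h₁ : p.1.1 = q.1.1) (h₂ : p.1.2 = q.1.2) : p = q :=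
  Subtype.ext (Prod.ext h₁ h₂)

theorem Lam.ext_iff : p = q ↔ p.1.1 = q.1.1 ∧ p.1.2 = q.1.2 :=
  ⟨fun h => h ▸ ⟨rfl, rfl⟩, fun h => Lam.ext h.1 h.2⟩

theorem lamE_iff : lamE p q ↔
    (q.1.1 = p.1.1 ∧ p.1.1 < q.1.2 ∧ q.1.2 < p.1.2) ∨
      (q.1.2 = p.1.2 ∧ p.1.1 < q.1.1 ∧ q.1.1 < p.1.2) := by
  constructor
  · rintro ⟨-, ⟨h₁, h₂⟩ | ⟨h₁, h₂⟩⟩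
    · exact .inl ⟨h₁, h₁ ▸ q.2, h₂⟩
    · exact .inr ⟨h₁, h₂, h₁ ▸ q.2⟩
  · rintro (⟨h₁, -, h₂⟩ | ⟨h₁, h₂, -⟩)
    · exact ⟨fun h => h₂.ne (congrArg (·.1.2) h).symm, .inl ⟨h₁, h₂⟩⟩
    · exact ⟨fun h => h₂.ne (congrArg (·.1.1) h), .inr ⟨h₁, h₂⟩⟩

theorem mem_invLam : p ∈ invLam σ ↔ σ⁻¹ p.1.2 < σ⁻¹ p.1.1 := by
  simp [invLam]

theorem notMem_invLam : p ∉ invLam σ ↔ σ⁻¹ p.1.1 < σ⁻¹ p.1.2 := by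
  rw [mem_invLam, not_lt]
  exact (σ⁻¹.injective.ne p.2.ne).le_iff_lt

theorem invLam_one : invLam (1 : Equiv.Perm (Fin n)) = ∅ :=
  Finset.eq_empty_of_forall_notMem fun p => notMem_invLam.2 p.2

theorem swap_lt_swap_iff_of_covBy {i j u v : Fin n} (h : i ⋖ j) :
    Equiv.swap i j u < Equiv.swap i j v ↔ (u < v ∧ ¬(u = i ∧ v = j)) ∨ (u = j ∧ v = i) := by
  rw [Fin.covBy_iff, Nat.covBy_iff_add_one_eq] at h
  simp only [Equiv.swap_apply_def]
  split_ifs <;> simp only [Fin.lt_def, Fin.ext_iff] at * <;> omega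

theorem invLam_mul_swap (hcov : σ⁻¹ p.1.1 ⋖ σ⁻¹ p.1.2) :
    invLam (σ * Equiv.swap (σ⁻¹ p.1.1) (σ⁻¹ p.1.2)) = insert p (invLam σ) := by
  ext q
  have hqp : ¬(q.1.2 = p.1.1 ∧ q.1.1 = p.1.2) := fun h => (h.1 ▸ h.2 ▸ q.2).not_gt p.2
  simp only [Finset.mem_insert, mem_invLam, mul_inv_rev, Equiv.swap_inv, Equiv.Perm.mul_apply,
    swap_lt_swap_iff_of_covBy hcov, EmbeddingLike.apply_eq_iff_eq, Lam.ext_iff]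
  tauto

theorem exists_covBy_of_invLam_nonempty (h : (invLam σ).Nonempty) :
    ∃ i j, i ⋖ j ∧ σ j < σ i := by
  by_contra! hmono
  have : StrictMono σ := strictMono_of_lt_succ fun i hi =>
    (hmono _ _ (Order.covBy_succ_of_not_isMax hi)).lt_of_ne
      (σ.injective.ne (Order.lt_succ_of_not_isMax hi).ne)
  obtain ⟨p, hp⟩ := h
  exact (notMem_invLam.2 (this.lt_iff_lt.1 (by simpa using p.2))) hp

theorem card_filter_lamE_invLam (hp : p ∉ invLam σ) :
    ((invLam σ).filter (lamE p)).card =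
      ((Finset.Ioo p.1.1 p.1.2).filter
        fun k => σ⁻¹ k < σ⁻¹ p.1.1 ∨ σ⁻¹ p.1.2 < σ⁻¹ k).card := by
  rw [notMem_invLam] at hp
  refine Finset.card_bij (fun q _ => if q.1.1 = p.1.1 then q.1.2 else q.1.1) ?_ ?_ ?_
  · intro q hq
    rw [Finset.mem_filter, mem_invLam, lamE_iff] at hq
    rcases hq with ⟨hinv, ⟨h₁, h₂, h₃⟩ | ⟨h₁, h₂, h₃⟩⟩
    · simp only [h₁, if_true, Finset.mem_filter, Finset.mem_Ioo]
      exact ⟨⟨h₂, h₃⟩, .inl (h₁ ▸ hinv)⟩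
    · simp only [h₂.ne', if_false, Finset.mem_filter, Finset.mem_Ioo]
      exact ⟨⟨h₂, h₃⟩, .inr (h₁ ▸ hinv)⟩
  · intro q hq q' hq' hqq'
    rw [Finset.mem_filter, mem_invLam, lamE_iff] at hq hq'
    rcases hq with ⟨hinv, ⟨h₁, h₂, -⟩ | ⟨h₁, h₂, -⟩⟩ <;>
      rcases hq' with ⟨hinv', ⟨h₁', h₂', -⟩ | ⟨h₁', h₂', -⟩⟩ <;>
      simp only [h₁, h₁', h₂.ne', h₂'.ne', if_true, if_false] at hqq'
    · exact Lam.ext (h₁.trans h₁'.symm) hqq'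
    -- `(a,k)` and `(k,b)` both in `Inv σ` would put `(a,b)` in `Inv σ`
    · rw [h₁, hqq'] at hinv; rw [h₁'] at hinv'
      exact absurd (hinv'.trans hinv) hp.not_gt
    · rw [h₁', ← hqq'] at hinv'; rw [h₁] at hinv
      exact absurd (hinv.trans hinv') hp.not_gt
    · exact Lam.ext hqq' (h₁.trans h₁'.symm)
  · intro k hk
    rw [Finset.mem_filter, Finset.mem_Ioo] at hk
    obtain ⟨⟨hak, hkb⟩, hleft | hright⟩ := hk
    · exact ⟨⟨(p.1.1, k), hak⟩,
        Finset.mem_filter.2 ⟨mem_invLam.2 hleft, lamE_iff.2 (.inl ⟨rfl, hak, hkb⟩)⟩, if_pos rfl⟩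
    · exact ⟨⟨(k, p.1.2), hkb⟩,
        Finset.mem_filter.2 ⟨mem_invLam.2 hright, lamE_iff.2 (.inr ⟨rfl, hak, hkb⟩)⟩,
        if_neg hak.ne'⟩

theorem curVal_invLam (hp : p ∉ invLam σ) :
    curVal lamE lamTheta (invLam σ) p =
      ((Finset.Ioo p.1.1 p.1.2).filter
        fun k => σ⁻¹ p.1.1 < σ⁻¹ k ∧ σ⁻¹ k < σ⁻¹ p.1.2).card := by
  have hmiddle : ((Finset.Ioo p.1.1 p.1.2).filter
      fun k => ¬(σ⁻¹ k < σ⁻¹ p.1.1 ∨ σ⁻¹ p.1.2 < σ⁻¹ k)) =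
        (Finset.Ioo p.1.1 p.1.2).filter fun k => σ⁻¹ p.1.1 < σ⁻¹ k ∧ σ⁻¹ k < σ⁻¹ p.1.2 := by
    refine Finset.filter_congr fun k hk => ?_
    rw [Finset.mem_Ioo] at hk
    have ha : σ⁻¹ k ≠ σ⁻¹ p.1.1 := σ⁻¹.injective.ne hk.1.ne'
    have hb : σ⁻¹ k ≠ σ⁻¹ p.1.2 := σ⁻¹.injective.ne hk.2.ne
    rw [not_or, not_lt, not_lt, ha.symm.le_iff_lt, hb.le_iff_lt]
  have hsplit := (Finset.Ioo p.1.1 p.1.2).card_filter_add_card_filter_not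
    fun k => σ⁻¹ k < σ⁻¹ p.1.1 ∨ σ⁻¹ p.1.2 < σ⁻¹ k
  rw [curVal, lamTheta, card_filter_lamE_invLam hp, ← Fin.card_Ioo, ← hsplit, hmiddle]
  omega

theorem curVal_invLam_ne_zero_iff (hp : p ∉ invLam σ) :
    curVal lamE lamTheta (invLam σ) p ≠ 0 ↔
      ∃ k, p.1.1 < k ∧ k < p.1.2 ∧ σ⁻¹ p.1.1 < σ⁻¹ k ∧ σ⁻¹ k < σ⁻¹ p.1.2 := by
  simp [curVal_invLam hp]

theorem erasableAt_invLam_iff :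
    ErasableAt lamE lamTheta (invLam σ) p ↔ σ⁻¹ p.1.1 ⋖ σ⁻¹ p.1.2 := by
  constructor
  · rintro ⟨hp, hval, hpred⟩
    refine covBy_of_not_between σ⁻¹.surjective (notMem_invLam.1 hp)
      (fun k hak hkb hk => (curVal_invLam_ne_zero_iff hp).2 ⟨k, hak, hkb, hk⟩ hval)
      (fun d hbd had => ?_) (fun c hca hcb => ?_)
    · have hz : (⟨(p.1.1, d), p.2.trans hbd⟩ : Lam n) ∉ invLam σ := notMem_invLam.2 had
      exact (curVal_invLam_ne_zero_iff hz).1 (hpred _ hz (lamE_iff.2 (.inl ⟨rfl, p.2, hbd⟩)))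
    · have hz : (⟨(c, p.1.2), hca.trans p.2⟩ : Lam n) ∉ invLam σ := notMem_invLam.2 hcb
      exact (curVal_invLam_ne_zero_iff hz).1 (hpred _ hz (lamE_iff.2 (.inr ⟨rfl, hca, p.2⟩)))
  · intro hcov
    have hp : p ∉ invLam σ := notMem_invLam.2 hcov.lt
    refine ⟨hp, not_not.1 fun h => ?_, fun z hz hzp => ?_⟩
    · obtain ⟨k, -, -, h₁, h₂⟩ := (curVal_invLam_ne_zero_iff hp).1 h
      exact hcov.2 h₁ h₂
    rw [curVal_invLam_ne_zero_iff hz]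
    rw [notMem_invLam] at hz
    rcases lamE_iff.1 hzp with ⟨h₁, h₂, h₃⟩ | ⟨h₁, h₂, h₃⟩
    · rw [← h₁] at hz ⊢
      exact ⟨p.1.2, p.2, h₃, hcov.lt, (not_lt.1 (hcov.2 hz)).lt_of_ne (σ⁻¹.injective.ne h₃.ne)⟩
    · rw [← h₁] at hz ⊢
      exact ⟨p.1.1, h₂, p.2,
        (not_lt.1 fun h => hcov.2 h hz).lt_of_ne (σ⁻¹.injective.ne h₂.ne), hcov.lt⟩

end Staircase

theorem isInitialSection_invLam {n : ℕ} (σ : Equiv.Perm (Fin n)) :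
    IsInitialSection lamE lamTheta (invLam σ) := by
  induction hc : (invLam σ).card using Nat.strong_induction_on generalizing σ with
  | _ m ih =>
    obtain hempty | hne := (invLam σ).eq_empty_or_nonempty
    · rw [hempty]
      exact isInitialSection_empty
    obtain ⟨i, j, hij, hji⟩ := exists_covBy_of_invLam_nonempty hne
    set τ := σ * Equiv.swap i j
    let p : Lam n := ⟨(σ j, σ i), hji⟩
    have hτ : τ⁻¹ p.1.1 = i ∧ τ⁻¹ p.1.2 = j := by simp [τ, p]
    have hcov : τ⁻¹ p.1.1 ⋖ τ⁻¹ p.1.2 := hτ.1 ▸ hτ.2 ▸ hij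
    have hσ : invLam σ = insert p (invLam τ) := by
      rw [← invLam_mul_swap hcov, hτ.1, hτ.2, Equiv.mul_swap_mul_self]
    have hp := erasableAt_invLam_iff.2 hcov
    have hlt : (invLam τ).card < m := hc ▸ hσ ▸ Finset.card_lt_card (Finset.ssubset_insert hp.1)
    rw [hσ]
    exact (ih _ hlt τ rfl).insert hp

/-- the initial sections of the staircase valued digraph `𝒜` are
exactly the inversion sets of permutations of `S_n`. -/
theorem initialSections_staircase_eq_invSets (n : ℕ) (A : Finset (Lam n)) :
    IsInitialSection lamE lamTheta A ↔ ∃ σ : Equiv.Perm (Fin n), A = invLam σ := by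
  constructor
  · refine isInitialSection_induction (P := fun A => ∃ σ, A = invLam σ)
      ⟨1, invLam_one.symm⟩ ?_
    rintro _ p ⟨σ, rfl⟩ hp
    exact ⟨_, (invLam_mul_swap (erasableAt_invLam_iff.1 hp)).symm⟩
  · rintro ⟨σ, rfl⟩
    exact isInitialSection_invLam σ
end

section
/- With 𝒜 the staircase valued digraph (vertices {(a,b) : 1 ≤ a < b ≤ n}, arcs from (a,b) to (a,k) and (k,b) for a < k < b, valuation θ(a,b) = b-a-1), the poset (IS(𝒜), ⊆) of initial sections ordered by inclusion is isomorphic to the right weak order on the symmetric group S_n. -/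
open scoped Classical

variable {V : Type*}

/-!
An adjacent transposition at an ascent of `σ` adds exactly one inversion, the box
`(σ i, σ (i+1))`, and `Inv σ` determines `σ`; so `Inv σ ⊆ Inv τ` can be climbed from `σ` to `τ`
one ascent at a time, which is a reduced word and gives the weak order. After peeling `Inv σ`,
the current value of a box `(a, b) ∉ Inv σ` counts the values lying between `a` and `b` both in
value and in position in `σ`. Hence the erasable boxes are exactly the ascent boxes
`(σ i, σ (i+1))`, peeling one of them turns `Inv σ` into `Inv (σ s_i)`, and the initial
sections are precisely the inversion sets.
-/

namespace Staircase

open Finset Equiv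

variable {n : ℕ} {σ τ : Perm (Fin n)}

def box (a b : Fin n) (h : a < b) : Lam n := ⟨(a, b), h⟩

@[simp] lemma box_fst {a b : Fin n} (h : a < b) : (box a b h).1.1 = a := rfl

@[simp] lemma box_snd {a b : Fin n} (h : a < b) : (box a b h).1.2 = b := rfl

lemma eq_box_iff {p : Lam n} {a b : Fin n} {h : a < b} : p = box a b h ↔ p.1.1 = a ∧ p.1.2 = b :=
  Subtype.ext_iff.trans Prod.ext_iff

lemma mem_invLam {p : Lam n} : p ∈ invLam σ ↔ σ⁻¹ p.1.2 < σ⁻¹ p.1.1 := by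
  simp [invLam]

lemma lt_of_notMem_invLam {p : Lam n} (hp : p ∉ invLam σ) : σ⁻¹ p.1.1 < σ⁻¹ p.1.2 :=
  (not_lt.1 (mem_invLam.not.1 hp)).lt_of_ne fun h => p.2.ne (σ⁻¹.injective h)

lemma box_mem_invLam_iff {i j : Fin n} (h : σ i < σ j) : box (σ i) (σ j) h ∈ invLam σ ↔ j < i := by
  rw [mem_invLam]
  simp [box]

lemma invLam_one : invLam (1 : Perm (Fin n)) = ∅ :=
  eq_empty_of_forall_notMem fun p hp => (mem_invLam.1 hp).asymm p.2

lemma permLen_eq_card_invLam : permLen σ = #(invLam σ) := by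
  let e : Lam n ↪ Fin n × Fin n := Function.Embedding.subtype _
  have : InvSet σ = (invLam σ).map e := by
    ext p
    simp only [InvSet, mem_map, mem_filter, mem_univ, true_and]
    exact ⟨fun h => ⟨⟨p, h.1⟩, mem_invLam.2 h.2, rfl⟩,
      by rintro ⟨q, hq, rfl⟩; exact ⟨q.2, mem_invLam.1 hq⟩⟩
  rw [permLen, this, card_map]

lemma eq_one_of_forall_adjacent_lt (h : ∀ i j : Fin n, (j : ℕ) = i + 1 → σ i < σ j) : σ = 1 := by
  cases n with
  | zero => exact Subsingleton.elim _ _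
  | succ n =>
    have hmono : StrictMono σ := Fin.strictMono_iff_lt_succ.2 fun i => h _ _ (by simp)
    exact Perm.ext fun x => congrFun hmono.eq_id x

lemma swap_lt_swap_iff_of_adjacent {i j a b : Fin n} (hj : (j : ℕ) = i + 1)
    (hba : ¬(a = j ∧ b = i)) : swap i j b < swap i j a ↔ (a = i ∧ b = j) ∨ b < a := by
  rw [swap_apply_def, swap_apply_def]
  split_ifs <;> simp only [Fin.lt_def, Fin.ext_iff, not_and] at * <;> omega

lemma invLam_mul_swap {i j : Fin n} (hj : (j : ℕ) = i + 1) (h : σ i < σ j) :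
    invLam (σ * swap i j) = insert (box (σ i) (σ j) h) (invLam σ) := by
  ext p
  have hp : p = box (σ i) (σ j) h ↔ σ⁻¹ p.1.1 = i ∧ σ⁻¹ p.1.2 = j := by
    simp only [eq_box_iff, Perm.inv_eq_iff_eq]
  have hba : ¬(σ⁻¹ p.1.1 = j ∧ σ⁻¹ p.1.2 = i) := by
    simp only [Perm.inv_eq_iff_eq]
    rintro ⟨h1, h2⟩
    exact h.asymm (h1 ▸ h2 ▸ p.2)
  rw [mem_insert, mem_invLam, mem_invLam, hp, ← swap_lt_swap_iff_of_adjacent hj hba]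
  simp [Perm.mul_apply]

lemma box_notMem_invLam {i j : Fin n} (hj : (j : ℕ) = i + 1) (h : σ i < σ j) :
    box (σ i) (σ j) h ∉ invLam σ := by
  rw [box_mem_invLam_iff, Fin.lt_def]
  omega

lemma card_invLam_mul_swap {i j : Fin n} (hj : (j : ℕ) = i + 1) (h : σ i < σ j) :
    #(invLam (σ * swap i j)) = #(invLam σ) + 1 := by
  rw [invLam_mul_swap hj h, card_insert_of_notMem (box_notMem_invLam hj h)]

lemma eq_of_invLam_subset (hsub : invLam σ ⊆ invLam τ)
    (hasc : ∀ i j : Fin n, (j : ℕ) = i + 1 → ∀ h : σ i < σ j, box (σ i) (σ j) h ∉ invLam τ) :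
    σ = τ := by
  suffices τ⁻¹ * σ = 1 from (inv_mul_eq_one.1 this).symm
  refine eq_one_of_forall_adjacent_lt fun i j hj => ?_
  have hij : σ i ≠ σ j := σ.injective.ne (Fin.ne_of_val_ne (by omega))
  rcases hij.lt_or_gt with h | h
  · exact lt_of_notMem_invLam (hasc i j hj h)
  · have hmem : box (σ j) (σ i) h ∈ invLam σ := (box_mem_invLam_iff h).2 (by rw [Fin.lt_def]; omega)
    exact mem_invLam.1 (hsub hmem)

lemma invLam_injective : Function.Injective (invLam (n := n)) := fun _ _ h =>
  eq_of_invLam_subset h.subset fun _ _ hj hlt => h ▸ box_notMem_invLam hj hlt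

lemma exists_adjacent_box_mem_of_invLam_subset (hsub : invLam σ ⊆ invLam τ) (hne : σ ≠ τ) :
    ∃ i j : Fin n, (j : ℕ) = i + 1 ∧ ∃ h : σ i < σ j, box (σ i) (σ j) h ∈ invLam τ := by
  by_contra! hcon
  exact hne (eq_of_invLam_subset hsub hcon)

theorem invLam_subset_induction {P : Perm (Fin n) → Prop} (top : P τ)
    (step : ∀ σ (i j : Fin n), (j : ℕ) = i + 1 → σ i < σ j →
      invLam (σ * swap i j) ⊆ invLam τ → P (σ * swap i j) → P σ)
    (hσ : invLam σ ⊆ invLam τ) : P σ := by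
  induction hk : #(invLam τ) - #(invLam σ) using Nat.strong_induction_on generalizing σ with
  | _ k ih =>
  obtain rfl | hne := eq_or_ne σ τ
  · exact top
  obtain ⟨i, j, hj, h, hmem⟩ := exists_adjacent_box_mem_of_invLam_subset hσ hne
  have hsub : invLam (σ * swap i j) ⊆ invLam τ := by
    rw [invLam_mul_swap hj h]
    exact insert_subset hmem hσ
  have hcard := card_le_card hsub
  have hsucc := card_invLam_mul_swap hj h
  exact step σ i j hj h hsub (ih _ (by omega) hsub rfl)

lemma invLam_subset_mul_or_permLen_eq_succ {s : Perm (Fin n)} (hs : IsSimpleT s) :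
    (invLam σ ⊆ invLam (σ * s) ∧ permLen (σ * s) = permLen σ + 1) ∨
      permLen σ = permLen (σ * s) + 1 := by
  obtain ⟨i, j, hj, rfl⟩ := hs
  simp only [permLen_eq_card_invLam]
  have hij : σ i ≠ σ j := σ.injective.ne (Fin.ne_of_val_ne (by omega))
  rcases hij.lt_or_gt with h | h
  · rw [invLam_mul_swap hj h, card_insert_of_notMem (box_notMem_invLam hj h)]
    exact Or.inl ⟨subset_insert _ _, rfl⟩
  · right
    have hback : σ = σ * swap i j * swap i j := by simp [mul_assoc]
    have h' : (σ * swap i j) i < (σ * swap i j) j := by simpa [Perm.mul_apply] using h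
    conv_lhs => rw [hback]
    exact card_invLam_mul_swap hj h'

lemma permLen_mul_prod_le {l : List (Perm (Fin n))} (hl : ∀ s ∈ l, IsSimpleT s) (σ : Perm (Fin n)) :
    permLen (σ * l.prod) ≤ permLen σ + l.length := by
  induction l generalizing σ with
  | nil => simp
  | cons s l ih =>
    have hs := invLam_subset_mul_or_permLen_eq_succ (σ := σ) (hl s List.mem_cons_self)
    have := ih (fun t ht => hl t (List.mem_cons_of_mem s ht)) (σ * s)
    rw [List.prod_cons, ← mul_assoc, List.length_cons]
    omega

lemma invLam_subset_of_weakLE (h : WeakLE σ τ) : invLam σ ⊆ invLam τ := by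
  obtain ⟨l, hl, rfl, hlen⟩ := h
  induction l generalizing σ with
  | nil => simp
  | cons s l ih =>
    have hl' : ∀ t ∈ l, IsSimpleT t := fun t ht => hl t (List.mem_cons_of_mem s ht)
    rw [List.prod_cons, ← mul_assoc] at hlen ⊢
    rw [List.length_cons] at hlen
    rcases invLam_subset_mul_or_permLen_eq_succ (σ := σ) (hl s List.mem_cons_self) with
      ⟨hsub, hsucc⟩ | hpred
    · exact hsub.trans (ih hl' (by omega))
    · have := permLen_mul_prod_le hl' (σ * s)
      omega

lemma weakLE_of_invLam_subset (h : invLam σ ⊆ invLam τ) : WeakLE σ τ := by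
  refine invLam_subset_induction (P := (WeakLE · τ)) ⟨[], by simp, by simp, by simp⟩ ?_ h
  rintro σ i j hj hlt - ⟨l, hl, hprod, hlen⟩
  refine ⟨swap i j :: l, ?_, by rw [hprod, List.prod_cons, mul_assoc], ?_⟩
  · exact List.forall_mem_cons.2 ⟨⟨i, j, hj, rfl⟩, hl⟩
  · rw [hlen, List.length_cons, permLen_eq_card_invLam, permLen_eq_card_invLam,
      card_invLam_mul_swap hj hlt]
    omega

theorem weakLE_iff_invLam_subset : WeakLE σ τ ↔ invLam σ ⊆ invLam τ :=
  ⟨invLam_subset_of_weakLE, weakLE_of_invLam_subset⟩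

lemma lamE_iff {p q : Lam n} :
    lamE p q ↔ (q.1.1 = p.1.1 ∧ q.1.2 < p.1.2) ∨ (q.1.2 = p.1.2 ∧ p.1.1 < q.1.1) := by
  refine ⟨And.right, fun h => ⟨?_, h⟩⟩
  rintro rfl
  rcases h with ⟨-, h⟩ | ⟨-, h⟩ <;> exact lt_irrefl _ h

lemma mem_filter_lamE_invLam {z y : Lam n} :
    y ∈ {y ∈ invLam σ | lamE z y} ↔ σ⁻¹ y.1.2 < σ⁻¹ y.1.1 ∧
      ((y.1.1 = z.1.1 ∧ y.1.2 < z.1.2) ∨ (y.1.2 = z.1.2 ∧ z.1.1 < y.1.1)) := by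
  rw [mem_filter, mem_invLam, lamE_iff]

/-- An arc `z → y` into `Inv σ` is determined by the third value `k` of its hook, and
it lies in `Inv σ` exactly when `k` does not sit between the two values of `z` in `σ`. -/
lemma card_filter_lamE_invLam {z : Lam n} (hz : z ∉ invLam σ) :
    #{y ∈ invLam σ | lamE z y} =
      #{k ∈ Ioo z.1.1 z.1.2 | σ⁻¹ k < σ⁻¹ z.1.1 ∨ σ⁻¹ z.1.2 < σ⁻¹ k} := by
  have hz' := lt_of_notMem_invLam hz
  obtain ⟨⟨a, b⟩, hab⟩ := z
  refine card_nbij (fun y => if y.1.1 = a then y.1.2 else y.1.1) ?_ ?_ ?_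
  · rintro ⟨⟨u, v⟩, huv⟩ hy
    obtain ⟨hinv, ⟨rfl, hvb⟩ | ⟨rfl, hau⟩⟩ := mem_filter_lamE_invLam.1 hy
    · simpa [hvb, huv] using Or.inl hinv
    · simpa [hau, hau.ne', huv] using Or.inr hinv
  · rintro ⟨⟨u₁, v₁⟩, huv₁⟩ hy₁ ⟨⟨u₂, v₂⟩, huv₂⟩ hy₂ he
    obtain ⟨hinv₁, ⟨rfl, h₁⟩ | ⟨rfl, h₁⟩⟩ := mem_filter_lamE_invLam.1 (mem_coe.1 hy₁) <;>
      obtain ⟨hinv₂, ⟨rfl, h₂⟩ | ⟨rfl, h₂⟩⟩ := mem_filter_lamE_invLam.1 (mem_coe.1 hy₂) <;>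
      simp only [if_true, h₁.ne', h₂.ne', if_false] at he <;> subst he
    · rfl
    · exact absurd (hinv₂.trans hinv₁) hz'.not_gt
    · exact absurd (hinv₁.trans hinv₂) hz'.not_gt
    · rfl
  · intro k hk
    obtain ⟨⟨hak, hkb⟩, hpos | hpos⟩ := mem_Ioo.1 (mem_filter.1 hk).1, (mem_filter.1 hk).2
    · exact ⟨box a k hak, mem_filter_lamE_invLam.2 ⟨hpos, Or.inl ⟨rfl, hkb⟩⟩, if_pos rfl⟩
    · exact ⟨box k b hkb, mem_filter_lamE_invLam.2 ⟨hpos, Or.inr ⟨rfl, hak⟩⟩, if_neg hak.ne'⟩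

lemma curVal_invLam_eq_card {z : Lam n} (hz : z ∉ invLam σ) :
    curVal lamE lamTheta (invLam σ) z =
      #{k ∈ Ioo z.1.1 z.1.2 | σ⁻¹ z.1.1 < σ⁻¹ k ∧ σ⁻¹ k < σ⁻¹ z.1.2} := by
  have hz' := lt_of_notMem_invLam hz
  have hout : {k ∈ Ioo z.1.1 z.1.2 | ¬(σ⁻¹ z.1.1 < σ⁻¹ k ∧ σ⁻¹ k < σ⁻¹ z.1.2)} =
      {k ∈ Ioo z.1.1 z.1.2 | σ⁻¹ k < σ⁻¹ z.1.1 ∨ σ⁻¹ z.1.2 < σ⁻¹ k} := by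
    refine filter_congr fun k hk => ?_
    have ha : σ⁻¹ k ≠ σ⁻¹ z.1.1 := σ⁻¹.injective.ne (mem_Ioo.1 hk).1.ne'
    have hb : σ⁻¹ k ≠ σ⁻¹ z.1.2 := σ⁻¹.injective.ne (mem_Ioo.1 hk).2.ne
    simp only [Fin.lt_def] at ha hb hz' ⊢
    omega
  have hsplit := card_filter_add_card_filter_not (s := Ioo z.1.1 z.1.2)
    fun k => σ⁻¹ z.1.1 < σ⁻¹ k ∧ σ⁻¹ k < σ⁻¹ z.1.2
  have hθ : lamTheta z = #(Ioo z.1.1 z.1.2) := (Fin.card_Ioo _ _).symm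
  rw [curVal, card_filter_lamE_invLam hz, ← hout, hθ]
  omega

lemma curVal_invLam_eq_zero_iff {z : Lam n} (hz : z ∉ invLam σ) :
    curVal lamE lamTheta (invLam σ) z = 0 ↔
      ¬∃ k, z.1.1 < k ∧ k < z.1.2 ∧ σ⁻¹ z.1.1 < σ⁻¹ k ∧ σ⁻¹ k < σ⁻¹ z.1.2 := by
  simp [curVal_invLam_eq_card hz, filter_eq_empty_iff]

lemma erasableAt_box_of_adjacent {i j : Fin n} (hj : (j : ℕ) = i + 1) (h : σ i < σ j) :
    ErasableAt lamE lamTheta (invLam σ) (box (σ i) (σ j) h) := by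
  refine ⟨box_notMem_invLam hj h, ?_, fun z hz hzx => ?_⟩
  · refine (curVal_invLam_eq_zero_iff (box_notMem_invLam hj h)).2 ?_
    rintro ⟨k, -, -, hik, hkj⟩
    simp only [box_fst, box_snd, Perm.coe_inv, symm_apply_apply, Fin.lt_def] at hik hkj
    omega
  rw [Ne, curVal_invLam_eq_zero_iff hz, not_not]
  have hz' := lt_of_notMem_invLam hz
  obtain ⟨⟨c, d⟩, hcd⟩ := z
  rcases lamE_iff.1 hzx with ⟨hic : σ i = c, hjd : σ j < d⟩ | ⟨hjd : σ j = d, hci : c < σ i⟩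
  · subst hic
    have hne : σ⁻¹ d ≠ j := fun he => hjd.ne (by rw [← he]; simp)
    refine ⟨σ j, h, hjd, ?_, ?_⟩ <;>
      simp only [Perm.coe_inv, symm_apply_apply, Fin.lt_def, ne_eq, Fin.ext_iff] at hz' hne ⊢ <;>
      omega
  · subst hjd
    have hne : σ⁻¹ c ≠ i := fun he => hci.ne (by rw [← he]; simp)
    refine ⟨σ i, hci, h, ?_, ?_⟩ <;>
      simp only [Perm.coe_inv, symm_apply_apply, Fin.lt_def, ne_eq, Fin.ext_iff] at hz' hne ⊢ <;>
      omega

/-- The values placed by `σ` between the two values `a < b` of `x` all lie outside `[a, b]`,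
since `x` has current value `0`; the nearest one below `a`, or else the nearest one above `b`,
gives the predecessor. -/
lemma exists_lamE_curVal_eq_zero {x : Lam n} (hx : x ∉ invLam σ)
    (hcv : curVal lamE lamTheta (invLam σ) x = 0) (hgap : (σ⁻¹ x.1.1 : ℕ) + 1 < σ⁻¹ x.1.2) :
    ∃ z ∉ invLam σ, lamE z x ∧ curVal lamE lamTheta (invLam σ) z = 0 := by
  rw [curVal_invLam_eq_zero_iff hx] at hcv
  obtain ⟨⟨a, b⟩, hab : a < b⟩ := x
  change ¬∃ k, a < k ∧ k < b ∧ σ⁻¹ a < σ⁻¹ k ∧ σ⁻¹ k < σ⁻¹ b at hcv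
  change (σ⁻¹ a : ℕ) + 1 < σ⁻¹ b at hgap
  set S : Finset (Fin n) := {k | σ⁻¹ a < σ⁻¹ k ∧ σ⁻¹ k < σ⁻¹ b}
  have hout : ∀ k ∈ S, k < a ∨ b < k := by
    intro k hk
    obtain ⟨hak, hkb⟩ := (mem_filter.1 hk).2
    rcases lt_trichotomy k a with hka | rfl | hak'
    · exact Or.inl hka
    · exact absurd hak (lt_irrefl _)
    rcases lt_trichotomy k b with hkb' | rfl | hbk
    · exact absurd ⟨k, hak', hkb', hak, hkb⟩ hcv
    · exact absurd hkb (lt_irrefl _)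
    · exact Or.inr hbk
  by_cases hlow : ∃ k ∈ S, k < a
  · obtain ⟨k, hkT, hmax⟩ := (S.filter (· < a)).exists_max_image id
      (let ⟨k, hk, hka⟩ := hlow; ⟨k, mem_filter.2 ⟨hk, hka⟩⟩)
    obtain ⟨hkS, hka : k < a⟩ := mem_filter.1 hkT
    have hkS' := (mem_filter.1 hkS).2
    have hz : box k b (hka.trans hab) ∉ invLam σ := fun hm => (mem_invLam.1 hm).asymm hkS'.2
    refine ⟨_, hz, lamE_iff.2 (Or.inr ⟨rfl, hka⟩), (curVal_invLam_eq_zero_iff hz).2 ?_⟩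
    rintro ⟨m, hkm : k < m, hmb : m < b, hpkm, hpmb⟩
    have hmS : m ∈ S := mem_filter.2 ⟨mem_univ _, hkS'.1.trans hpkm, hpmb⟩
    rcases hout m hmS with hma | hbm
    · exact (hmax m (mem_filter.2 ⟨hmS, hma⟩)).not_gt hkm
    · exact hbm.asymm hmb
  · push Not at hlow
    have hne : S.Nonempty := ⟨σ ⟨σ⁻¹ a + 1, by omega⟩, mem_filter.2 ⟨mem_univ _, by
      simp only [Perm.coe_inv, symm_apply_apply, Fin.lt_def] at hgap ⊢; omega⟩⟩
    obtain ⟨k, hkS, hmin⟩ := S.exists_min_image id hne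
    have hkS' := (mem_filter.1 hkS).2
    have hbk : b < k := (hout k hkS).resolve_left (hlow k hkS).not_gt
    have hz : box a k (hab.trans hbk) ∉ invLam σ := fun hm => (mem_invLam.1 hm).asymm hkS'.1
    refine ⟨_, hz, lamE_iff.2 (Or.inl ⟨rfl, hbk⟩), (curVal_invLam_eq_zero_iff hz).2 ?_⟩
    rintro ⟨m, ham : a < m, hmk : m < k, hpam, hpmk⟩
    have hmS : m ∈ S := mem_filter.2 ⟨mem_univ _, hpam, hpmk.trans hkS'.2⟩
    exact (hmin m hmS).not_gt hmk

lemma exists_adjacent_of_erasableAt {x : Lam n} (hx : ErasableAt lamE lamTheta (invLam σ) x) :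
    ∃ i j : Fin n, (j : ℕ) = i + 1 ∧ ∃ h : σ i < σ j, x = box (σ i) (σ j) h := by
  obtain ⟨hxR, hcv, hmin⟩ := hx
  have hlt := lt_of_notMem_invLam hxR
  refine ⟨σ⁻¹ x.1.1, σ⁻¹ x.1.2, ?_, by simpa using x.2, eq_box_iff.2 (by simp)⟩
  by_contra hne
  obtain ⟨z, hz, hzx, hz0⟩ := exists_lamE_curVal_eq_zero hxR hcv (by rw [Fin.lt_def] at hlt; omega)
  exact hmin z hz hzx hz0

lemma exists_invLam_of_peelFrom {L : List (Lam n)} (hL : PeelFrom lamE lamTheta (invLam σ) L) :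
    ∃ τ : Perm (Fin n), invLam σ ∪ L.toFinset = invLam τ := by
  induction L generalizing σ with
  | nil => exact ⟨σ, by simp⟩
  | cons x L ih =>
    obtain ⟨hx, hL⟩ := hL
    obtain ⟨i, j, hj, h, rfl⟩ := exists_adjacent_of_erasableAt hx
    rw [← invLam_mul_swap hj h] at hL
    obtain ⟨τ, hτ⟩ := ih hL
    exact ⟨τ, by rw [← hτ, invLam_mul_swap hj h, List.toFinset_cons, union_insert, insert_union]⟩

lemma exists_peelFrom_of_invLam_subset (h : invLam σ ⊆ invLam τ) :
    ∃ L, PeelFrom lamE lamTheta (invLam σ) L ∧ invLam σ ∪ L.toFinset = invLam τ := by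
  refine invLam_subset_induction
    (P := fun σ => ∃ L, PeelFrom lamE lamTheta (invLam σ) L ∧ invLam σ ∪ L.toFinset = invLam τ)
    ⟨[], trivial, by simp⟩ ?_ h
  rintro σ i j hj hlt - ⟨L, hL, hτ⟩
  refine ⟨box (σ i) (σ j) hlt :: L, ⟨erasableAt_box_of_adjacent hj hlt, ?_⟩, ?_⟩
  · rwa [← invLam_mul_swap hj hlt]
  · rw [← hτ, invLam_mul_swap hj hlt, List.toFinset_cons, union_insert, insert_union]

theorem isInitialSection_iff_exists_eq_invLam {A : Finset (Lam n)} :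
    IsInitialSection lamE lamTheta A ↔ ∃ σ : Perm (Fin n), A = invLam σ := by
  constructor
  · rintro ⟨L, hL, rfl⟩
    obtain ⟨τ, hτ⟩ := exists_invLam_of_peelFrom (σ := 1) (invLam_one ▸ hL)
    exact ⟨τ, by rwa [invLam_one, empty_union] at hτ⟩
  · rintro ⟨σ, rfl⟩
    obtain ⟨L, hL, hσ⟩ := exists_peelFrom_of_invLam_subset (σ := 1) (τ := σ) (by simp [invLam_one])
    exact ⟨L, invLam_one ▸ hL, by rwa [invLam_one, empty_union] at hσ⟩

end Staircase

/-- the poset of initial sections of the staircase valued digraph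
`𝒜`, ordered by inclusion, is isomorphic to the right weak order on `S_n`, via
the map `σ ↦ Inv(σ)`. -/
theorem staircase_iso_weakOrder (n : ℕ) :
    (∀ σ τ : Equiv.Perm (Fin n), WeakLE σ τ ↔ invLam σ ⊆ invLam τ) ∧
    (∀ A : Finset (Lam n),
        IsInitialSection lamE lamTheta A ↔ ∃ σ : Equiv.Perm (Fin n), A = invLam σ) ∧
    Function.Injective (invLam (n := n)) :=
  ⟨fun _ _ => Staircase.weakLE_iff_invLam_subset,
    fun _ => Staircase.isInitialSection_iff_exists_eq_invLam, Staircase.invLam_injective⟩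
end

section
/- Let σ ∈ Ã_n (affine permutation) and j ∈ [n]. There is a pair (a,b) with 1 ≤ a ≤ n, a < b, such that σ s_j swaps positions of a+kn and b+kn for all k ∈ ℤ, and: if σ⁻¹(a) = σ⁻¹(b) - 1 then ℓ(σ s_j) = ℓ(σ)+1 and Inv_Ã(σ s_j) = Inv_Ã(σ) ∪ {(a,b)}; otherwise ℓ(σ s_j) = ℓ(σ)-1 and Inv_Ã(σ s_j) = Inv_Ã(σ) ∖ {(a,b)}. -/
/-! Since `(σ s)⁻¹ = s ∘ σ⁻¹`, right multiplication by `s` post-composes `σ⁻¹` with an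
involution of `ℤ` that moves every point by at most one. Such a map preserves the order of two
values unless it swaps them, so the only pairs whose inversion status changes are those whose
positions are `{i + kn, i + 1 + kn}`. Up to translation by multiples of `n` there is exactly one
such pair `(a, b)` with `1 ≤ a ≤ n`, and the inversion set gains or loses just that pair. -/

/-- `σ` is an affine permutation in `Ã_n`: a bijection of `ℤ` with
`σ(q + n) = σ(q) + n` and `σ(1) + ⋯ + σ(n) = n(n+1)/2`. -/
def IsAffine (n : ℕ) (σ : Equiv.Perm ℤ) : Prop :=
  (∀ q : ℤ, σ (q + n) = σ q + n) ∧
    ∑ i ∈ Finset.Icc (1 : ℤ) (n : ℤ), σ i = (n : ℤ) * ((n : ℤ) + 1) / 2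

/-- The Coxeter generators `s_1, …, s_n` of `Ã_n`: `s_i` swaps `i + kn` and
`i + 1 + kn` for all `k ∈ ℤ`. -/
def AffGen (n : ℕ) (s : Equiv.Perm ℤ) : Prop :=
  ∃ i : ℕ, 1 ≤ i ∧ i ≤ n ∧ ∀ x : ℤ,
    s x = if x % (n : ℤ) = (i : ℤ) % (n : ℤ) then x + 1
      else if x % (n : ℤ) = ((i : ℤ) + 1) % (n : ℤ) then x - 1 else x

/-- The `Ã`-inversion set:
`Inv_Ã(σ) = {(a,b) ∈ [n] × ℕ* : a < b, σ⁻¹ a > σ⁻¹ b}`. -/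
def InvASet (n : ℕ) (σ : Equiv.Perm ℤ) : Set (ℤ × ℤ) :=
  {p | 1 ≤ p.1 ∧ p.1 ≤ (n : ℤ) ∧ p.1 < p.2 ∧ σ⁻¹ p.2 < σ⁻¹ p.1}

/-- Coxeter length on `Ã_n`, i.e. the number of `Ã`-inversions. -/
noncomputable def aLen (n : ℕ) (σ : Equiv.Perm ℤ) : ℕ := Set.ncard (InvASet n σ)

/-- The right weak order on `Ã_n`. -/
def AWeakLE (n : ℕ) (σ ω : Equiv.Perm ℤ) : Prop :=
  ∃ l : List (Equiv.Perm ℤ), (∀ s ∈ l, AffGen n s) ∧ ω = σ * l.prod ∧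
    aLen n ω = aLen n σ + l.length


open scoped AddConstMap

theorem apply_add_mul_of_apply_add {n : ℤ} {f : ℤ → ℤ} (hf : ∀ x, f (x + n) = f x + n)
    (x k : ℤ) : f (x + k * n) = f x + k * n := by
  simpa only [smul_eq_mul, AddConstMap.coe_mk] using
    AddConstMapClass.map_add_zsmul (⟨f, hf⟩ : ℤ →+c[n, n] ℤ) x k

theorem modEq_apply_of_apply_add {n : ℤ} {f : ℤ → ℤ} (hf : ∀ x, f (x + n) = f x + n)
    {x y : ℤ} (h : x ≡ y [ZMOD n]) : f x ≡ f y [ZMOD n] := by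
  obtain ⟨t, rfl⟩ := Int.modEq_iff_add_fac.1 h
  rw [mul_comm, apply_add_mul_of_apply_add hf]
  exact Int.modEq_iff_add_fac.2 ⟨t, by ring⟩

theorem exists_abs_apply_sub_le_of_apply_add {n : ℤ} (hn : 0 < n) {f : ℤ → ℤ}
    (hf : ∀ x, f (x + n) = f x + n) : ∃ C, ∀ x, |f x - x| ≤ C := by
  have hper : Function.Periodic (fun x => |f x - x|) n := fun x => by
    simp only [hf, add_sub_add_right_eq_sub]
  obtain ⟨C, hC⟩ := ((Set.finite_Ico 0 n).image fun x => |f x - x|).bddAbove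
  refine ⟨C, fun x => ?_⟩
  obtain ⟨y, hy, hxy⟩ := hper.exists_mem_Ico₀ hn x
  exact hxy ▸ hC ⟨y, hy, rfl⟩

theorem eq_of_modEq_of_mem_Icc {n x y : ℤ} (h : x ≡ y [ZMOD n]) (hx : 1 ≤ x ∧ x ≤ n)
    (hy : 1 ≤ y ∧ y ≤ n) : x = y :=
  (sub_eq_zero.1 (Int.eq_zero_of_abs_lt_dvd h.dvd (abs_sub_lt_iff.2 ⟨by omega, by omega⟩))).symm

namespace Equiv.Perm

variable {n : ℤ} {τ : Equiv.Perm ℤ}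

theorem inv_apply_add_of_apply_add (hτ : ∀ x, τ (x + n) = τ x + n) (x : ℤ) :
    τ⁻¹ (x + n) = τ⁻¹ x + n := by
  rw [inv_eq_iff_eq, hτ, coe_inv, Equiv.apply_symm_apply]

theorem apply_modEq_apply_iff (hτ : ∀ x, τ (x + n) = τ x + n) {x y : ℤ} :
    τ x ≡ τ y [ZMOD n] ↔ x ≡ y [ZMOD n] :=
  ⟨fun h => by simpa using modEq_apply_of_apply_add (inv_apply_add_of_apply_add hτ) h,
    modEq_apply_of_apply_add hτ⟩

end Equiv.Perm

theorem finite_invASet {n : ℕ} {σ : Equiv.Perm ℤ} (hσ : ∀ q : ℤ, σ (q + n) = σ q + n) :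
    (InvASet n σ).Finite := by
  rcases Nat.eq_zero_or_pos n with rfl | hn
  · refine Set.finite_empty.subset fun p ⟨h1, h2, _⟩ => ?_
    simp only [Nat.cast_zero] at h2
    omega
  obtain ⟨C, hC⟩ := exists_abs_apply_sub_le_of_apply_add (by exact_mod_cast hn)
    (Equiv.Perm.inv_apply_add_of_apply_add hσ)
  refine ((Set.finite_Icc 1 (n : ℤ)).prod (Set.finite_Icc 1 (n + 2 * C))).subset ?_
  rintro ⟨a, b⟩ ⟨ha1, han, hab, hinv⟩
  have ha := abs_le.1 (hC a)
  have hb := abs_le.1 (hC b)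
  exact ⟨⟨ha1, han⟩, by linarith, by linarith⟩

theorem lt_iff_lt_of_involutive {s : ℤ → ℤ} (hs : Function.Involutive s)
    (hd : ∀ x, |s x - x| ≤ 1) {x y : ℤ} (hxy : x ≠ y) (hsxy : s x ≠ y) :
    s x < s y ↔ x < y := by
  have hx := abs_le.1 (hd x)
  have hy := abs_le.1 (hd y)
  have hsne : s x ≠ s y := hs.injective.ne hxy
  have hsyx : s y ≠ x := fun h => hsxy (by rw [← h, hs y])
  omega

theorem Int.not_add_one_modEq_self {n : ℤ} (hn : 2 ≤ n) (x : ℤ) : ¬x + 1 ≡ x [ZMOD n] := by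
  intro h
  have := Int.le_of_dvd one_pos (dvd_neg.1 (by simpa using h.dvd))
  omega

/-- For `n ≥ 2` these properties characterise the generators `s_1, …, s_n` of `Ã_n`. -/
structure IsSimpleReflection (n : ℤ) (s : Equiv.Perm ℤ) : Prop where
  involutive : Function.Involutive s
  apply_add : ∀ x, s (x + n) = s x + n
  abs_apply_sub_le_one : ∀ x, |s x - x| ≤ 1
  modEq_of_apply_ne : ∀ x y, s x ≠ x → s y ≠ y → y ≡ x [ZMOD n] ∨ y ≡ s x [ZMOD n]
  exists_apply_ne : ∃ x, s x ≠ x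

theorem AffGen.isSimpleReflection {n : ℕ} (hn : 2 ≤ n) {s : Equiv.Perm ℤ} (hs : AffGen n s) :
    IsSimpleReflection n s := by
  obtain ⟨i, -, -, hsx⟩ := hs
  have hcases : ∀ x, (x ≡ i [ZMOD n] ∧ s x = x + 1) ∨ (x ≡ i + 1 [ZMOD n] ∧ s x = x - 1) ∨
      s x = x := by
    intro x
    rw [hsx x]
    split_ifs with h₁ h₂
    exacts [.inl ⟨h₁, rfl⟩, .inr (.inl ⟨h₂, rfl⟩), .inr (.inr rfl)]
  have hn' : (2 : ℤ) ≤ n := by exact_mod_cast hn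
  refine ⟨fun x => ?_, fun x => ?_, fun x => ?_, fun x y hx hy => ?_, ⟨i, ?_⟩⟩
  · rcases hcases x with ⟨hx, hsx⟩ | ⟨hx, hsx⟩ | hsx
    · rcases hcases (x + 1) with ⟨h, -⟩ | ⟨-, h⟩ | h
      · exact absurd (h.trans hx.symm) (Int.not_add_one_modEq_self hn' x)
      · rw [hsx, h, add_sub_cancel_right]
      · exact absurd (s.injective (h.trans hsx.symm)) (by omega)
    · rcases hcases (x - 1) with ⟨-, h⟩ | ⟨h, -⟩ | h
      · rw [hsx, h, sub_add_cancel]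
      · exact absurd (by simpa using hx.trans h.symm) (Int.not_add_one_modEq_self hn' (x - 1))
      · exact absurd (s.injective (h.trans hsx.symm)) (by omega)
    · rw [hsx, hsx]
  · simp only [hsx, Int.add_emod_right]
    split_ifs <;> ring
  · rcases hcases x with ⟨-, h⟩ | ⟨-, h⟩ | h <;> simp [h]
  · rcases hcases x with ⟨hx, hsx⟩ | ⟨hx, hsx⟩ | hsx
    · rcases hcases y with ⟨hy, -⟩ | ⟨hy, -⟩ | hsy
      · exact .inl (hy.trans hx.symm)
      · exact .inr (hsx ▸ hy.trans (hx.add_right 1).symm)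
      · exact absurd hsy hy
    · rcases hcases y with ⟨hy, -⟩ | ⟨hy, -⟩ | hsy
      · exact .inr (hsx ▸ hy.trans (by simpa using (hx.sub_right 1).symm))
      · exact .inl (hy.trans hx.symm)
      · exact absurd hsy hy
    · exact absurd hsx hx
  · rw [hsx, if_pos rfl]
    omega

namespace IsSimpleReflection

variable {n : ℤ} {s τ : Equiv.Perm ℤ}

theorem inv_apply (hs : IsSimpleReflection n s) (x : ℤ) : s⁻¹ x = s x :=
  Equiv.Perm.inv_eq_iff_eq.2 (hs.involutive x).symm

theorem mul_inv_apply (hs : IsSimpleReflection n s) (σ : Equiv.Perm ℤ) (x : ℤ) :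
    (σ * s)⁻¹ x = s (σ⁻¹ x) := by
  rw [mul_inv_rev, Equiv.Perm.mul_apply, hs.inv_apply]

theorem apply_add_mul_swap (hs : IsSimpleReflection n s) (hτ : ∀ x, τ (x + n) = τ x + n)
    {a b : ℤ} (habs : s (τ a) = τ b) (k : ℤ) :
    s (τ (a + k * n)) = τ (b + k * n) ∧ s (τ (b + k * n)) = τ (a + k * n) := by
  have hbas : s (τ b) = τ a := by rw [← habs, hs.involutive]
  simp only [apply_add_mul_of_apply_add hτ, apply_add_mul_of_apply_add hs.apply_add, habs, hbas,
    and_self]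

theorem exists_swap_mem_Icc (hs : IsSimpleReflection n s) (hn : 0 < n)
    (hτ : ∀ x, τ (x + n) = τ x + n) : ∃ a b, 1 ≤ a ∧ a ≤ n ∧ a < b ∧ s (τ a) = τ b := by
  obtain ⟨x, y, hxy, hsxy⟩ : ∃ x y, x < y ∧ s (τ x) = τ y := by
    obtain ⟨z, hz⟩ := hs.exists_apply_ne
    have hne : τ⁻¹ z ≠ τ⁻¹ (s z) := fun h => hz (τ⁻¹.injective h).symm
    rcases hne.lt_or_gt with h | h
    · exact ⟨_, _, h, by simp⟩
    · exact ⟨_, _, h, by simp [hs.involutive z]⟩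
  obtain ⟨k, hk, -⟩ := existsUnique_add_zsmul_mem_Ico hn x 1
  rw [smul_eq_mul, Set.mem_Ico] at hk
  exact ⟨x + k * n, y + k * n, hk.1, by linarith, by linarith, (hs.apply_add_mul_swap hτ hsxy k).1⟩

theorem eq_of_swap_mem_Icc (hs : IsSimpleReflection n s) (hτ : ∀ x, τ (x + n) = τ x + n)
    {a b x y : ℤ} (ha : 1 ≤ a ∧ a ≤ n) (hab : a < b) (habs : s (τ a) = τ b)
    (hx : 1 ≤ x ∧ x ≤ n) (hxy : x < y) (hxys : s (τ x) = τ y) : x = a ∧ y = b := by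
  have hmoved : ∀ {p q}, p < q → s (τ p) = τ q → s (τ p) ≠ τ p :=
    fun hpq h => h ▸ τ.injective.ne hpq.ne'
  rcases hs.modEq_of_apply_ne _ _ (hmoved hab habs) (hmoved hxy hxys) with h | h
  · obtain rfl := eq_of_modEq_of_mem_Icc ((Equiv.Perm.apply_modEq_apply_iff hτ).1 h) hx ha
    exact ⟨rfl, τ.injective (hxys.symm.trans habs)⟩
  · -- then `b = x + t n`, and translating the swap `(x, y)` by `t n` gives `a = y + t n`
    rw [habs, Equiv.Perm.apply_modEq_apply_iff hτ] at h
    obtain ⟨t, rfl⟩ := Int.modEq_iff_add_fac.1 h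
    have hshift := (hs.apply_add_mul_swap hτ hxys t).1
    rw [mul_comm, ← habs, hs.involutive] at hshift
    have := τ.injective hshift.symm
    exact absurd hab (by linarith)

theorem apply_eq_self_of_forall_ne (hs : IsSimpleReflection n s)
    (hτ : ∀ x, τ (x + n) = τ x + n) {a b c : ℤ} (hab : a ≠ b) (habs : s (τ a) = τ b)
    (hc : ∀ k : ℤ, c ≠ a + k * n ∧ c ≠ b + k * n) : s (τ c) = τ c := by
  by_contra hmoved
  have ha : s (τ a) ≠ τ a := habs ▸ τ.injective.ne hab.symm
  rcases hs.modEq_of_apply_ne _ _ ha hmoved with h | h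
  · rw [Equiv.Perm.apply_modEq_apply_iff hτ] at h
    obtain ⟨t, ht⟩ := Int.modEq_iff_add_fac.1 h.symm
    exact (hc t).1 (by rw [ht, mul_comm])
  · rw [habs, Equiv.Perm.apply_modEq_apply_iff hτ] at h
    obtain ⟨t, ht⟩ := Int.modEq_iff_add_fac.1 h.symm
    exact (hc t).2 (by rw [ht, mul_comm])

theorem lt_iff_of_ne_swap (hs : IsSimpleReflection n s) (hτ : ∀ x, τ (x + n) = τ x + n)
    {a b x y : ℤ} (ha : 1 ≤ a ∧ a ≤ n) (hab : a < b) (habs : s (τ a) = τ b)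
    (hx : 1 ≤ x ∧ x ≤ n) (hxy : x < y) (hne : (x, y) ≠ (a, b)) :
    s (τ y) < s (τ x) ↔ τ y < τ x := by
  refine lt_iff_lt_of_involutive hs.involutive hs.abs_apply_sub_le_one
    (τ.injective.ne hxy.ne') fun h => hne ?_
  obtain ⟨rfl, rfl⟩ := hs.eq_of_swap_mem_Icc hτ ha hab habs hx hxy (by rw [← h, hs.involutive])
  rfl

end IsSimpleReflection

theorem IsSimpleReflection.mem_invASet_mul_iff_of_ne {n : ℕ} {σ s : Equiv.Perm ℤ}
    (hs : IsSimpleReflection n s) (hσ : ∀ x, σ⁻¹ (x + n) = σ⁻¹ x + n) {a b : ℤ}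
    (ha : 1 ≤ a ∧ a ≤ n) (hab : a < b) (habs : s (σ⁻¹ a) = σ⁻¹ b) :
    ∀ p ≠ (a, b), p ∈ InvASet n (σ * s) ↔ p ∈ InvASet n σ := by
  rintro ⟨x, y⟩ hne
  simp only [InvASet, Set.mem_ofPred_eq, hs.mul_inv_apply]
  refine and_congr_right fun hx1 => and_congr_right fun hxn => and_congr_right fun hxy => ?_
  exact hs.lt_iff_of_ne_swap hσ ha hab habs ⟨hx1, hxn⟩ hxy hne

theorem IsSimpleReflection.mk_mem_invASet_mul_iff {n : ℕ} {σ s : Equiv.Perm ℤ}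
    (hs : IsSimpleReflection n s) {a b : ℤ} (ha : 1 ≤ a ∧ a ≤ n) (hab : a < b)
    (habs : s (σ⁻¹ a) = σ⁻¹ b) : (a, b) ∈ InvASet n (σ * s) ↔ (a, b) ∉ InvASet n σ := by
  have hbas : s (σ⁻¹ b) = σ⁻¹ a := by rw [← habs, hs.involutive]
  have hne : σ⁻¹ a ≠ σ⁻¹ b := σ⁻¹.injective.ne hab.ne
  simp only [InvASet, Set.mem_ofPred_eq, hs.mul_inv_apply, habs, hbas]
  omega

theorem Set.eq_union_singleton_of_forall_ne {α : Type*} {A B : Set α} {p : α}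
    (h : ∀ q ≠ p, q ∈ A ↔ q ∈ B) (hp : p ∈ A) : A = B ∪ {p} := by
  ext q
  by_cases hq : q = p <;> simp_all

theorem Set.eq_diff_singleton_of_forall_ne {α : Type*} {A B : Set α} {p : α}
    (h : ∀ q ≠ p, q ∈ A ↔ q ∈ B) (hp : p ∉ A) : A = B \ {p} := by
  ext q
  by_cases hq : q = p <;> simp_all

/-- for `σ ∈ Ã_n` and a generator `s_j`, there is a pair `(a,b)`
with `1 ≤ a ≤ n`, `a < b`, such that `σ s_j` is obtained from `σ` by swapping
the positions of `a + kn` and `b + kn` for all `k ∈ ℤ`, and: if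
`σ⁻¹ a = σ⁻¹ b - 1` then `ℓ(σ s_j) = ℓ(σ) + 1` and
`Inv_Ã(σ s_j) = Inv_Ã(σ) ∪ {(a,b)}`; otherwise `ℓ(σ s_j) = ℓ(σ) - 1` and
`Inv_Ã(σ s_j) = Inv_Ã(σ) \ {(a,b)}`. -/
theorem affineCover_adjacent (n : ℕ) (hn : 2 ≤ n) (σ s : Equiv.Perm ℤ)
    (hσ : IsAffine n σ) (hs : AffGen n s) :
    ∃ a b : ℤ, 1 ≤ a ∧ a ≤ (n : ℤ) ∧ a < b ∧
      (∀ k : ℤ, (σ * s)⁻¹ (a + k * n) = σ⁻¹ (b + k * n) ∧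
        (σ * s)⁻¹ (b + k * n) = σ⁻¹ (a + k * n)) ∧
      (∀ c : ℤ, (∀ k : ℤ, c ≠ a + k * n ∧ c ≠ b + k * n) → (σ * s)⁻¹ c = σ⁻¹ c) ∧
      (σ⁻¹ a = σ⁻¹ b - 1 →
        aLen n (σ * s) = aLen n σ + 1 ∧ InvASet n (σ * s) = InvASet n σ ∪ {(a, b)}) ∧
      (σ⁻¹ a ≠ σ⁻¹ b - 1 →
        aLen n (σ * s) + 1 = aLen n σ ∧ InvASet n (σ * s) = InvASet n σ \ {(a, b)}) := by
  have hs := hs.isSimpleReflection hn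
  have hτ := Equiv.Perm.inv_apply_add_of_apply_add hσ.1
  obtain ⟨a, b, ha1, han, hab, habs⟩ := hs.exists_swap_mem_Icc (by omega) hτ
  have hagree := hs.mem_invASet_mul_iff_of_ne hτ ⟨ha1, han⟩ hab habs
  have hmem := hs.mk_mem_invASet_mul_iff ⟨ha1, han⟩ hab habs
  have hfin := finite_invASet hσ.1
  refine ⟨a, b, ha1, han, hab, fun k => ?_, fun c hc => ?_, fun hup => ?_, fun hdown => ?_⟩
  · simpa only [hs.mul_inv_apply] using hs.apply_add_mul_swap hτ habs k
  · rw [hs.mul_inv_apply]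
    exact hs.apply_eq_self_of_forall_ne hτ hab.ne habs hc
  · have hnot : (a, b) ∉ InvASet n σ := by
      rintro ⟨-, -, -, h : σ⁻¹ b < σ⁻¹ a⟩
      omega
    have hset := Set.eq_union_singleton_of_forall_ne hagree (hmem.2 hnot)
    refine ⟨?_, hset⟩
    rw [aLen, aLen, hset, Set.union_singleton, Set.ncard_insert_of_notMem hnot hfin]
  · have hlt : σ⁻¹ b < σ⁻¹ a := by
      have hadj := abs_le.1 (habs ▸ hs.abs_apply_sub_le_one (σ⁻¹ a))
      have hba : σ⁻¹ b ≠ σ⁻¹ a := σ⁻¹.injective.ne hab.ne'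
      omega
    have hin : (a, b) ∈ InvASet n σ := ⟨ha1, han, hab, hlt⟩
    have hset := Set.eq_diff_singleton_of_forall_ne hagree fun h => hmem.1 h hin
    refine ⟨?_, hset⟩
    rw [aLen, aLen, hset]
    exact Set.ncard_sdiff_singleton_add_one hin hfin
end

section
/- For any valued digraph (G,θ), any set of generalized columns 𝒰 = (𝒰_z)_{z∈V}, and any initial section A, the formal power series Γ(A,𝒰) = Σ_f Π_{z∈A} x_{f(z)}, summed over all (A,𝒰)-semi-standard functions f, is a quasi-symmetric function: for any monomial x_{i_1}···x_{i_k} appearing in Γ(A,𝒰) and simple transposition s_j such that not both x_j and x_{j+1} appear in the monomial, the monomial and its image under swapping x_j, x_{j+1} have the same coefficient. -/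
/-!
Exchanging the values `j` and `j + 1` of a semi-standard function is harmless as long as
one of the two values is not taken: on the remaining values the transposition `(j j+1)` is
strictly increasing and fixes `0`, so every (weak or strict) inequality along the peeling
order survives, and the content of `f` is permuted accordingly. Since the transposition is
an involution, this is a bijection between the two sets of semi-standard functions.
-/

open scoped Classical

variable {V : Type*}

/-- `f` is an `(A,𝒰)`-semi-standard function: `f : A → ℕ*` (extended by `0`
outside `A`) and there is an ordering `L ∈ PS_A(𝒢)` of `A` which is a valid
peeling order, along which `f` is weakly increasing, and strictly increasing
from `z` to any later element of the generalized column `𝒰_z`. -/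
def IsSSF (E : V → V → Prop) (θ : V → ℕ) (U : V → Set V) (A : Finset V)
    (f : V → ℕ) : Prop :=
  (∀ z ∈ A, 1 ≤ f z) ∧ (∀ z ∉ A, f z = 0) ∧
    ∃ L : List V, PeelFrom E θ ∅ L ∧ L.toFinset = A ∧
      L.Pairwise (fun z w => f z ≤ f w) ∧
      L.Pairwise (fun z w => w ∈ U z → f z < f w)

open Set

theorem Equiv.strictMonoOn_swap_self_succ {j v : ℕ} (hv : v = j ∨ v = j + 1) :
    StrictMonoOn (Equiv.swap j (j + 1)) {v}ᶜ := by
  intro x hx y hy hxy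
  simp only [mem_compl_singleton_iff] at hx hy
  simp only [Equiv.swap_apply_def]
  split_ifs <;> omega

theorem IsSSF.comp_of_strictMonoOn {E : V → V → Prop} {θ : V → ℕ} {U : V → Set V}
    {A : Finset V} {f : V → ℕ} {g : ℕ → ℕ} {s : Set ℕ} (hf : IsSSF E θ U A f)
    (hg : StrictMonoOn g s) (h0 : 0 ∈ s) (hg0 : g 0 = 0) (hfs : ∀ z, f z ∈ s) :
    IsSSF E θ U A (g ∘ f) := by
  obtain ⟨hpos, hzero, L, hL, hLA, hle, hlt⟩ := hf
  refine ⟨fun z hz => ?_, fun z hz => by simp [hzero z hz, hg0], L, hL, hLA,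
    hle.imp fun h => hg.monotoneOn (hfs _) (hfs _) h,
    hlt.imp fun h hU => hg (hfs _) (hfs _) (h hU)⟩
  have : g 0 < g (f z) := hg h0 (hfs z) (hpos z hz)
  simp only [Function.comp_apply]
  omega

theorem Finset.card_filter_equiv_comp_eq {α β : Type*} [DecidableEq α] [DecidableEq β] (A : Finset V) (f : V → α) (σ : α ≃ β)
    (i : β) :
    (A.filter fun z => (σ ∘ f) z = i).card = (A.filter fun z => f z = σ.symm i).card := by
  simp only [Function.comp_apply, ← Equiv.eq_symm_apply]

theorem ne_of_card_filter_eq_zero {A : Finset V} {f : V → ℕ} (hzero : ∀ z ∉ A, f z = 0)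
    {v : ℕ} (hv : v ≠ 0) (hc : (A.filter fun z => f z = v).card = 0) (z : V) : f z ≠ v := by
  by_cases hz : z ∈ A
  · exact Finset.card_filter_eq_zero_iff.mp hc z hz
  · exact hzero z hz ▸ hv.symm

/-- The semi-standard functions contributing to the coefficient of `∏ i, x_i ^ m i` in `Γ(A,𝒰)`. -/
def ssfWithContent (E : V → V → Prop) (θ : V → ℕ) (U : V → Set V) (A : Finset V)
    (m : ℕ → ℕ) : Set (V → ℕ) :=
  {f | IsSSF E θ U A f ∧ ∀ i, (A.filter fun z => f z = i).card = m i}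

theorem mapsTo_swap_comp_ssfWithContent (E : V → V → Prop) (θ : V → ℕ) (U : V → Set V)
    (A : Finset V) {m : ℕ → ℕ} {j v : ℕ} (hj : 1 ≤ j) (hv : v = j ∨ v = j + 1) (hm : m v = 0) :
    MapsTo (Equiv.swap j (j + 1) ∘ ·) (ssfWithContent E θ U A m)
      (ssfWithContent E θ U A (m ∘ Equiv.swap j (j + 1))) := by
  rintro f ⟨hf, hcont⟩
  have hfv : ∀ z, f z ≠ v := ne_of_card_filter_eq_zero hf.2.1 (by omega) (by rw [hcont, hm])
  refine ⟨hf.comp_of_strictMonoOn (Equiv.strictMonoOn_swap_self_succ hv) (by simp; omega)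
    (Equiv.swap_apply_of_ne_of_ne (by omega) (by omega)) hfv, fun i => ?_⟩
  rw [Finset.card_filter_equiv_comp_eq, hcont, Equiv.symm_swap, Function.comp_apply]

theorem gamma_quasiSymmetric_general (E : V → V → Prop) (θ : V → ℕ)
    (U : V → Set V) (A : Finset V)
    (m : ℕ → ℕ) (j : ℕ) (hj : 1 ≤ j)
    (hm : m j = 0 ∨ m (j + 1) = 0) :
    Set.ncard {f : V → ℕ | IsSSF E θ U A f ∧
        ∀ i : ℕ, (A.filter fun z => f z = i).card = m i}
      = Set.ncard {f : V → ℕ | IsSSF E θ U A f ∧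
          ∀ i : ℕ, (A.filter fun z => f z = i).card = m (Equiv.swap j (j + 1) i)} := by
  set σ := Equiv.swap j (j + 1)
  obtain ⟨v, hv, hmv⟩ : ∃ v, (v = j ∨ v = j + 1) ∧ m v = 0 := by
    rcases hm with h | h
    exacts [⟨j, .inl rfl, h⟩, ⟨j + 1, .inr rfl, h⟩]
  have hσv : σ v = j ∨ σ v = j + 1 := by
    rcases hv with rfl | rfl <;> simp [σ]
  have hσσ : ∀ k, σ (σ k) = k := Equiv.swap_apply_self _ _
  have hinv : InvOn (σ ∘ ·) (σ ∘ ·) (ssfWithContent E θ U A m)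
      (ssfWithContent E θ U A (m ∘ σ)) :=
    ⟨fun f _ => funext fun z => hσσ (f z), fun f _ => funext fun z => hσσ (f z)⟩
  have hback := mapsTo_swap_comp_ssfWithContent E θ U A (m := m ∘ σ) hj hσv (by simp [hσσ, hmv])
  rw [Function.comp_assoc, show σ ∘ σ = id from funext hσσ, Function.comp_id] at hback
  exact (hinv.bijOn (mapsTo_swap_comp_ssfWithContent E θ U A hj hv hmv) hback).ncard_eq

/-- the series `Γ(A,𝒰) = Σ_f Π_{z∈A} x_{f(z)}` is quasi-symmetric:
for any monomial (given by its exponent function `m` on the variables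
`x_1, x_2, …`) and any `j ≥ 1` such that not both `x_j` and `x_{j+1}` occur in
it, the coefficient of the monomial equals the coefficient of the monomial
obtained by exchanging the variables `x_j` and `x_{j+1}`. -/
theorem gamma_quasiSymmetric (E : V → V → Prop) (θ : V → ℕ)
    (hac : Acyclic E) (hocv : IsOCV E θ) (U : V → Set V) (A : Finset V)
    (hA : IsInitialSection E θ A) (m : ℕ → ℕ) (j : ℕ) (hj : 1 ≤ j)
    (hm : m j = 0 ∨ m (j + 1) = 0) :
    Set.ncard {f : V → ℕ | IsSSF E θ U A f ∧
        ∀ i : ℕ, (A.filter fun z => f z = i).card = m i}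
      = Set.ncard {f : V → ℕ | IsSSF E θ U A f ∧
          ∀ i : ℕ, (A.filter fun z => f z = i).card = m (Equiv.swap j (j + 1) i)} :=
  gamma_quasiSymmetric_general E θ U A m j hj hm
end
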